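/- arXiv:nlin/0007008 — 5 statements merged into one kernel-verified Lean document; each statement's English description precedes it below -/
import Mathlib

section
/- There exists a unique continuous function F : [0,1] → ℂ satisfying the de Rham functional system, i.e. a unique continuous F with F(Q_m + q_m·y) = C_m + c_m·F(y) for all m ∈ {0,…,r−1} and all y ∈ [0,1]. Moreover this F satisfies F(0) = 0 and F(1) = 1. -/
open scoped BigOperators

open scoped NNReal

/-- `F` satisfies the de Rham functional system with contraction places `Q_m, q_m` and
values `C_m, c_m`, i.e. `F (Q_m + q_m y) = C_m + c_m F y` for all `m` and `y ∈ [0,1]`. -/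
def SatisfiesDeRham {r : ℕ} (q : Fin r → ℝ) (c : Fin r → ℂ)
    (F : C(Set.Icc (0 : ℝ) 1, ℂ)) : Prop :=
  ∀ (m : Fin r) (y : Set.Icc (0 : ℝ) 1)
    (h : (∑ j ∈ Finset.univ.filter (fun j => j < m), q j) + q m * (y : ℝ) ∈
      Set.Icc (0 : ℝ) 1),
    F ⟨(∑ j ∈ Finset.univ.filter (fun j => j < m), q j) + q m * (y : ℝ), h⟩ =
      (∑ j ∈ Finset.univ.filter (fun j => j < m), c j) + c m * F y

namespace DeRhamAux

variable {r : ℕ} (q : Fin r → ℝ) (c : Fin r → ℂ)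

noncomputable def qN (n : ℕ) : ℝ := if h : n < r then q ⟨n, h⟩ else 0
noncomputable def cN (n : ℕ) : ℂ := if h : n < r then c ⟨n, h⟩ else 0
noncomputable def QN (n : ℕ) : ℝ := ∑ j ∈ Finset.range n, qN q j
noncomputable def CN (n : ℕ) : ℂ := ∑ j ∈ Finset.range n, cN c j

theorem sum_filter_eq_range {M : Type*} [AddCommMonoid M] (f : Fin r → M) (m : Fin r) :
    ∑ j ∈ Finset.univ.filter (fun j => j < m), f j
      = ∑ j ∈ Finset.range m.val, (if h : j < r then f ⟨j, h⟩ else 0) := by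
  rw [Finset.sum_filter]
  have h1 : ∑ a : Fin r, (if a < m then f a else 0)
      = ∑ a : Fin r, (fun j => if h : j < r then (if j < m.val then f ⟨j, h⟩ else 0) else 0) a.val :=
    Finset.sum_congr rfl (fun a _ => by
      simp only [dif_pos a.isLt, Fin.eta, Fin.lt_def])
  rw [h1, Fin.sum_univ_eq_sum_range (fun j => if h : j < r then (if j < m.val then f ⟨j, h⟩ else 0) else 0)]
  have h2 : ∑ j ∈ Finset.range m.val,
      (fun j => if h : j < r then (if j < m.val then f ⟨j, h⟩ else 0) else 0) j
      = ∑ j ∈ Finset.range r,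
      (fun j => if h : j < r then (if j < m.val then f ⟨j, h⟩ else 0) else 0) j := by
    apply Finset.sum_subset (Finset.range_subset_range.2 m.isLt.le)
    intro j _ hj
    rw [Finset.mem_range, not_lt] at hj
    split
    · rw [if_neg (by omega)]
    · rfl
  rw [← h2]
  apply Finset.sum_congr rfl
  intro j hj
  have hj' := Finset.mem_range.1 hj
  simp only [dif_pos (lt_of_lt_of_le hj' m.isLt.le), if_pos hj']

theorem Qfilter (m : Fin r) :
    (∑ j ∈ Finset.univ.filter (fun j => j < m), q j) = QN q m.val :=
  sum_filter_eq_range q m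

theorem Cfilter (m : Fin r) :
    (∑ j ∈ Finset.univ.filter (fun j => j < m), c j) = CN c m.val :=
  sum_filter_eq_range c m

theorem QN_succ (n : ℕ) : QN q (n + 1) = QN q n + qN q n := Finset.sum_range_succ _ _
theorem CN_succ (n : ℕ) : CN c (n + 1) = CN c n + cN c n := Finset.sum_range_succ _ _
theorem QN_zero : QN q 0 = 0 := rfl
theorem CN_zero : CN c 0 = 0 := rfl

theorem qN_nonneg (hq : ∀ m, 0 < q m) (n : ℕ) : 0 ≤ qN q n := by
  unfold qN; split
  · exact (hq _).le
  · exact le_refl _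

theorem qN_pos (hq : ∀ m, 0 < q m) {n : ℕ} (h : n < r) : 0 < qN q n := by
  unfold qN; rw [dif_pos h]; exact hq _

theorem QN_mono (hq : ∀ m, 0 < q m) : Monotone (QN q) := by
  intro a b hab
  exact Finset.sum_le_sum_of_subset_of_nonneg (Finset.range_subset_range.2 hab)
    (fun j _ _ => qN_nonneg q hq j)

theorem QN_r (hqsum : ∑ m, q m = 1) : QN q r = 1 := by
  rw [← hqsum]
  rw [show (∑ m, q m) = ∑ m : Fin r, qN q m.val from
    Finset.sum_congr rfl (fun a _ => by simp [qN, dif_pos a.isLt])]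
  rw [Fin.sum_univ_eq_sum_range (fun j => qN q j) r]
  rfl

theorem CN_r (hcsum : ∑ m, c m = 1) : CN c r = 1 := by
  rw [← hcsum]
  rw [show (∑ m, c m) = ∑ m : Fin r, cN c m.val from
    Finset.sum_congr rfl (fun a _ => by simp [cN, dif_pos a.isLt])]
  rw [Fin.sum_univ_eq_sum_range (fun j => cN c j) r]
  rfl

end DeRhamAux

namespace DeRhamAux

noncomputable def pieceN {r : ℕ} (q : Fin r → ℝ) (c : Fin r → ℂ)
    (F : C(Set.Icc (0:ℝ) 1, ℂ)) (n : ℕ) : ℝ → ℂ :=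
  fun x => CN c n + cN c n * F (Set.projIcc 0 1 zero_le_one ((x - QN q n) / qN q n))

noncomputable def DG {r : ℕ} (q : Fin r → ℝ) (c : Fin r → ℂ)
    (F : C(Set.Icc (0:ℝ) 1, ℂ)) : ℕ → ℝ → ℂ
  | 0 => pieceN q c F 0
  | n+1 => fun x => if x ≤ QN q (n+1) then DG q c F n x else pieceN q c F (n+1) x

variable {r : ℕ} (q : Fin r → ℝ) (c : Fin r → ℂ) (F : C(Set.Icc (0:ℝ) 1, ℂ))

theorem pieceN_continuous (n : ℕ) : Continuous (pieceN q c F n) := by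
  unfold pieceN
  apply Continuous.add continuous_const
  apply Continuous.mul continuous_const
  exact F.continuous.comp (continuous_projIcc.comp (by fun_prop))

theorem consistency (hq : ∀ m, 0 < q m)
    (hF0 : F ⟨0, Set.mem_Icc.mpr ⟨le_refl 0, zero_le_one⟩⟩ = 0)
    (hF1 : F ⟨1, Set.mem_Icc.mpr ⟨zero_le_one, le_refl 1⟩⟩ = 1)
    {n : ℕ} (hn : n < r) :
    pieceN q c F n (QN q (n+1)) = pieceN q c F (n+1) (QN q (n+1)) := by
  unfold pieceN
  have h1 : (QN q (n+1) - QN q n) / qN q n = 1 := by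
    rw [QN_succ]
    field_simp [(qN_pos q hq hn).ne']
    ring
  have h2 : (QN q (n+1) - QN q (n+1)) / qN q (n+1) = 0 := by
    simp
  rw [h1, h2, Set.projIcc_of_mem zero_le_one (Set.mem_Icc.mpr ⟨zero_le_one, le_refl 1⟩),
    Set.projIcc_of_mem zero_le_one (Set.mem_Icc.mpr ⟨le_refl 0, zero_le_one⟩), hF0, hF1,
    CN_succ]
  ring

theorem DG_eq_pieceN (hq : ∀ m, 0 < q m)
    (hF0 : F ⟨0, Set.mem_Icc.mpr ⟨le_refl 0, zero_le_one⟩⟩ = 0)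
    (hF1 : F ⟨1, Set.mem_Icc.mpr ⟨zero_le_one, le_refl 1⟩⟩ = 1) :
    ∀ n, n < r → ∀ m ≤ n, ∀ x, QN q m ≤ x → x ≤ QN q (m+1) →
      DG q c F n x = pieceN q c F m x := by
  intro n
  induction n with
  | zero =>
    intro _ m hm x _ _
    interval_cases m
    rfl
  | succ n ih =>
    intro hn1 m hm x hx1 hx2
    have hn : n < r := by omega
    rcases Nat.lt_or_ge m (n+1) with hmn | hmn
    · have hxle : x ≤ QN q (n+1) := le_trans hx2 (QN_mono q hq (by omega))
      rw [DG]; dsimp only; rw [if_pos hxle]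
      exact ih hn m (by omega) x hx1 hx2
    · have hm' : m = n + 1 := le_antisymm hm hmn
      subst hm'
      rw [DG]; dsimp only
      split
      · have hxeq : x = QN q (n+1) := le_antisymm (by assumption) hx1
        subst hxeq
        rw [ih hn n le_rfl _ (QN_mono q hq (Nat.le_succ n)) le_rfl]
        exact consistency q c F hq hF0 hF1 hn
      · rfl

theorem DG_continuous (hq : ∀ m, 0 < q m)
    (hF0 : F ⟨0, Set.mem_Icc.mpr ⟨le_refl 0, zero_le_one⟩⟩ = 0)
    (hF1 : F ⟨1, Set.mem_Icc.mpr ⟨zero_le_one, le_refl 1⟩⟩ = 1) :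
    ∀ n, n < r → Continuous (DG q c F n) := by
  intro n
  induction n with
  | zero => intro _; exact pieceN_continuous q c F 0
  | succ n ih =>
    intro hn1
    have hn : n < r := by omega
    have : DG q c F (n+1) = fun x => if x ≤ QN q (n+1) then DG q c F n x
        else pieceN q c F (n+1) x := rfl
    rw [this]
    apply Continuous.if_le (ih hn) (pieceN_continuous q c F (n+1)) continuous_id
      continuous_const
    intro x hx
    subst hx
    rw [DG_eq_pieceN q c F hq hF0 hF1 n hn n le_rfl _ (QN_mono q hq (Nat.le_succ n)) le_rfl]
    exact consistency q c F hq hF0 hF1 hn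

end DeRhamAux

namespace DeRhamAux

variable {r : ℕ} (q : Fin r → ℝ) (c : Fin r → ℂ)

theorem DG_dist_le (K : ℝ≥0) (hK : ∀ m, ‖c m‖₊ ≤ K)
    (F G : C(Set.Icc (0:ℝ) 1, ℂ)) :
    ∀ n x, dist (DG q c F n x) (DG q c G n x) ≤ K * dist F G := by
  have hcK : ∀ n : ℕ, ‖cN c n‖ ≤ (K : ℝ) := by
    intro n
    unfold cN
    split
    · rw [← coe_nnnorm]; exact_mod_cast hK _
    · simp
  have hpiece : ∀ n x, dist (pieceN q c F n x) (pieceN q c G n x) ≤ K * dist F G := by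
    intro n x
    unfold pieceN
    rw [dist_add_left, dist_eq_norm, ← mul_sub, norm_mul, ← dist_eq_norm]
    exact mul_le_mul (hcK n) (ContinuousMap.dist_apply_le_dist _) dist_nonneg K.coe_nonneg
  intro n
  induction n with
  | zero => exact hpiece 0
  | succ n ih =>
    intro x
    rw [DG, DG]; dsimp only
    split
    · exact ih x
    · exact hpiece (n+1) x

theorem covering (hq : ∀ m, 0 < q m) (x : ℝ) (hx0 : 0 ≤ x) :
    ∀ n, x ≤ QN q (n+1) → ∃ m ≤ n, QN q m ≤ x ∧ x ≤ QN q (m+1) := by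
  intro n
  induction n with
  | zero => intro h; exact ⟨0, le_rfl, by simpa [QN_zero] using hx0, h⟩
  | succ n ih =>
    intro h
    by_cases hle : x ≤ QN q (n+1)
    · obtain ⟨m, hm, h1, h2⟩ := ih hle
      exact ⟨m, by omega, h1, h2⟩
    · exact ⟨n+1, le_rfl, (not_le.1 hle).le, h⟩

end DeRhamAux

namespace DeRhamAux

variable {r : ℕ} (q : Fin r → ℝ) (c : Fin r → ℂ) (F : C(Set.Icc (0:ℝ) 1, ℂ))

theorem DG_at_zero (hr0 : 0 < r) (hq : ∀ m, 0 < q m)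
    (hF0 : F ⟨0, Set.mem_Icc.mpr ⟨le_refl 0, zero_le_one⟩⟩ = 0)
    (hF1 : F ⟨1, Set.mem_Icc.mpr ⟨zero_le_one, le_refl 1⟩⟩ = 1) :
    DG q c F (r-1) 0 = 0 := by
  rw [DG_eq_pieceN q c F hq hF0 hF1 (r-1) (by omega) 0 (by omega) 0
    (le_of_eq (QN_zero q).symm)
    (by rw [QN_succ, QN_zero, zero_add]; exact qN_nonneg q hq 0)]
  unfold pieceN
  rw [QN_zero, CN_zero]
  have : ((0:ℝ) - 0) / qN q 0 = 0 := by simp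
  rw [this, Set.projIcc_of_mem zero_le_one (Set.mem_Icc.mpr ⟨le_refl 0, zero_le_one⟩), hF0]
  ring

theorem DG_at_one (hr0 : 0 < r) (hq : ∀ m, 0 < q m) (hqsum : ∑ m, q m = 1)
    (hcsum : ∑ m, c m = 1)
    (hF0 : F ⟨0, Set.mem_Icc.mpr ⟨le_refl 0, zero_le_one⟩⟩ = 0)
    (hF1 : F ⟨1, Set.mem_Icc.mpr ⟨zero_le_one, le_refl 1⟩⟩ = 1) :
    DG q c F (r-1) 1 = 1 := by
  have hsr : r - 1 + 1 = r := by omega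
  have hQr : QN q (r-1+1) = 1 := by rw [hsr]; exact QN_r q hqsum
  rw [DG_eq_pieceN q c F hq hF0 hF1 (r-1) (by omega) (r-1) le_rfl 1
    (by rw [← QN_r q hqsum]; exact QN_mono q hq (by omega)) (le_of_eq hQr.symm)]
  unfold pieceN
  have h1 : ((1:ℝ) - QN q (r-1)) / qN q (r-1) = 1 := by
    have : (1:ℝ) - QN q (r-1) = qN q (r-1) := by
      have := QN_succ q (r-1); rw [hsr, QN_r q hqsum] at this; linarith
    rw [this]
    field_simp [(qN_pos q hq (by omega : r-1 < r)).ne']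
  rw [h1, Set.projIcc_of_mem zero_le_one (Set.mem_Icc.mpr ⟨zero_le_one, le_refl 1⟩), hF1,
    mul_one, ← CN_succ, hsr, CN_r c hcsum]

end DeRhamAux

namespace DeRhamAux

variable {r : ℕ} (q : Fin r → ℝ) (c : Fin r → ℂ) (F : C(Set.Icc (0:ℝ) 1, ℂ))

theorem qN_val (m : Fin r) : qN q m.val = q m := by
  unfold qN; rw [dif_pos m.isLt]

theorem cN_val (m : Fin r) : cN c m.val = c m := by
  unfold cN; rw [dif_pos m.isLt]

theorem endpoints (hr0 : 0 < r) (hqsum : ∑ m, q m = 1) (hc : ∀ m, ‖c m‖ < 1) (hcsum : ∑ m, c m = 1)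
    (hF : SatisfiesDeRham q c F) :
    F ⟨0, Set.mem_Icc.mpr ⟨le_refl 0, zero_le_one⟩⟩ = 0 ∧
    F ⟨1, Set.mem_Icc.mpr ⟨zero_le_one, le_refl 1⟩⟩ = 1 := by
  have hcne : ∀ m : Fin r, (1 : ℂ) - c m ≠ 0 := by
    intro m h
    have h1 : c m = 1 := by linear_combination -h
    have h2 := hc m
    rw [h1] at h2
    simp at h2
  constructor
  · set m0 : Fin r := ⟨0, hr0⟩
    have hS : (∑ j ∈ Finset.univ.filter (fun j => j < m0), q j) = 0 := by
      rw [Qfilter]; exact QN_zero q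
    have hCS : (∑ j ∈ Finset.univ.filter (fun j => j < m0), c j) = 0 := by
      rw [Cfilter]; exact CN_zero c
    set y0 : Set.Icc (0:ℝ) 1 := ⟨0, Set.mem_Icc.mpr ⟨le_refl 0, zero_le_one⟩⟩
    have hmem : (∑ j ∈ Finset.univ.filter (fun j => j < m0), q j) + q m0 * (y0 : ℝ)
        ∈ Set.Icc (0:ℝ) 1 := by
      rw [hS]; simp [y0]
    have key := hF m0 y0 hmem
    have hL : F ⟨(∑ j ∈ Finset.univ.filter (fun j => j < m0), q j) + q m0 * (y0 : ℝ), hmem⟩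
        = F y0 :=
      congrArg F (Subtype.ext (by
        show (∑ j ∈ Finset.univ.filter (fun j => j < m0), q j) + q m0 * (y0 : ℝ) = (0:ℝ)
        rw [hS]
        show (0:ℝ) + q m0 * 0 = 0
        ring))
    rw [hL, hCS, zero_add] at key
    have h2 : (1 - c m0) * F y0 = 0 := by linear_combination key
    exact (mul_eq_zero.1 h2).resolve_left (hcne m0)
  · set m1 : Fin r := ⟨r-1, by omega⟩
    have hsr : r - 1 + 1 = r := by omega
    have hS : (∑ j ∈ Finset.univ.filter (fun j => j < m1), q j) = QN q (r-1) := by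
      rw [Qfilter]
    have hCS : (∑ j ∈ Finset.univ.filter (fun j => j < m1), c j) = CN c (r-1) := by
      rw [Cfilter]
    set y1 : Set.Icc (0:ℝ) 1 := ⟨1, Set.mem_Icc.mpr ⟨zero_le_one, le_refl 1⟩⟩
    have hval : (∑ j ∈ Finset.univ.filter (fun j => j < m1), q j) + q m1 * (y1 : ℝ)
        = 1 := by
      rw [hS]
      show QN q (r-1) + q m1 * 1 = 1
      rw [mul_one, ← qN_val q m1]
      show QN q (r-1) + qN q (r-1) = 1
      rw [← QN_succ, hsr]
      exact QN_r q hqsum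
    have hmem : (∑ j ∈ Finset.univ.filter (fun j => j < m1), q j) + q m1 * (y1 : ℝ)
        ∈ Set.Icc (0:ℝ) 1 := by
      rw [hval]; exact Set.mem_Icc.mpr ⟨zero_le_one, le_refl 1⟩
    have key := hF m1 y1 hmem
    have hL : F ⟨(∑ j ∈ Finset.univ.filter (fun j => j < m1), q j) + q m1 * (y1 : ℝ), hmem⟩
        = F y1 :=
      congrArg F (Subtype.ext hval)
    have hCval : CN c (r-1) = 1 - c m1 := by
      have h := CN_succ c (r-1)
      rw [hsr, CN_r c hcsum] at h
      have h2 : cN c (r-1) = c m1 := cN_val c m1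
      rw [h2] at h
      linear_combination -h
    rw [hL, hCS, hCval] at key
    have h2 : (1 - c m1) * (F y1 - 1) = 0 := by linear_combination key
    have h3 := (mul_eq_zero.1 h2).resolve_left (hcne m1)
    linear_combination h3

end DeRhamAux

namespace DeRhamAux

variable {r : ℕ} (q : Fin r → ℝ) (c : Fin r → ℂ) (F : C(Set.Icc (0:ℝ) 1, ℂ))

theorem satisfies_of_DG (hr0 : 0 < r) (hq : ∀ m, 0 < q m)
    (hF0 : F ⟨0, Set.mem_Icc.mpr ⟨le_refl 0, zero_le_one⟩⟩ = 0)
    (hF1 : F ⟨1, Set.mem_Icc.mpr ⟨zero_le_one, le_refl 1⟩⟩ = 1)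
    (hfix : ∀ x : Set.Icc (0:ℝ) 1, DG q c F (r-1) ↑x = F x) :
    SatisfiesDeRham q c F := by
  intro m y h
  have hq' : qN q m.val = q m := qN_val q m
  have hx1 : QN q m.val ≤ (∑ j ∈ Finset.univ.filter (fun j => j < m), q j) + q m * (y : ℝ) := by
    rw [Qfilter]
    nlinarith [ (hq m).le, y.2.1 ]
  have hx2 : (∑ j ∈ Finset.univ.filter (fun j => j < m), q j) + q m * (y : ℝ)
      ≤ QN q (m.val + 1) := by
    rw [Qfilter, QN_succ, hq']
    have := y.2.2
    nlinarith [ (hq m).le ]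
  have h1 := hfix ⟨_, h⟩
  rw [DG_eq_pieceN q c F hq hF0 hF1 (r-1) (by omega) m.val (by omega : m.val ≤ r - 1)
    _ hx1 hx2] at h1
  rw [← h1]
  unfold pieceN
  have harg : ((∑ j ∈ Finset.univ.filter (fun j => j < m), q j) + q m * (y : ℝ) - QN q m.val)
      / qN q m.val = (y : ℝ) := by
    rw [Qfilter, hq', add_sub_cancel_left, mul_div_cancel_left₀ _ (hq m).ne']
  rw [harg, Set.projIcc_val zero_le_one y, cN_val, Cfilter]

theorem DG_of_satisfies (hr0 : 0 < r) (hq : ∀ m, 0 < q m) (hqsum : ∑ m, q m = 1)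
    (hF : SatisfiesDeRham q c F)
    (hF0 : F ⟨0, Set.mem_Icc.mpr ⟨le_refl 0, zero_le_one⟩⟩ = 0)
    (hF1 : F ⟨1, Set.mem_Icc.mpr ⟨zero_le_one, le_refl 1⟩⟩ = 1) :
    ∀ x : Set.Icc (0:ℝ) 1, DG q c F (r-1) ↑x = F x := by
  intro x
  have hx1 : (x:ℝ) ≤ QN q (r-1+1) := by
    rw [show r-1+1 = r from by omega, QN_r q hqsum]
    exact x.2.2
  obtain ⟨m, hm, h1, h2⟩ := covering q hq x x.2.1 (r-1) hx1
  have hmr : m < r := by omega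
  set mF : Fin r := ⟨m, hmr⟩
  have hq' : qN q m = q mF := qN_val q mF
  set y0 : ℝ := ((x:ℝ) - QN q m) / qN q m with hy0def
  have hy0 : y0 ∈ Set.Icc (0:ℝ) 1 := by
    constructor
    · exact div_nonneg (by linarith) (qN_nonneg q hq m)
    · rw [div_le_one (qN_pos q hq hmr)]
      have := QN_succ q m
      linarith
  have hval : (∑ j ∈ Finset.univ.filter (fun j => j < mF), q j) + q mF * y0 = (x:ℝ) := by
    rw [Qfilter]
    show QN q m + q mF * y0 = (x:ℝ)
    rw [hy0def, ← hq', mul_div_cancel₀ _ (qN_pos q hq hmr).ne']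
    ring
  have hmem : (∑ j ∈ Finset.univ.filter (fun j => j < mF), q j) + q mF * ((⟨y0, hy0⟩ :
      Set.Icc (0:ℝ) 1) : ℝ) ∈ Set.Icc (0:ℝ) 1 := by
    show (∑ j ∈ Finset.univ.filter (fun j => j < mF), q j) + q mF * y0 ∈ Set.Icc (0:ℝ) 1
    rw [hval]; exact x.2
  have key := hF mF ⟨y0, hy0⟩ hmem
  have hL : F ⟨(∑ j ∈ Finset.univ.filter (fun j => j < mF), q j) + q mF * ((⟨y0, hy0⟩ :
      Set.Icc (0:ℝ) 1) : ℝ), hmem⟩ = F x := congrArg F (Subtype.ext hval)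
  rw [hL] at key
  rw [DG_eq_pieceN q c F hq hF0 hF1 (r-1) (by omega) m hm _ h1 h2, key]
  unfold pieceN
  have hc1 : cN c m = c mF := cN_val c mF
  rw [hc1, Set.projIcc_of_mem zero_le_one hy0, Cfilter c mF]

end DeRhamAux

/-- There exists a unique continuous `F : [0,1] → ℂ` satisfying the de Rham functional
system `F (Q_m + q_m y) = C_m + c_m F y` for all `m ∈ {0, …, r-1}` and `y ∈ [0,1]`;
moreover this `F` satisfies `F 0 = 0` and `F 1 = 1`. -/
theorem deRham_existsUnique (r : ℕ) (hr : 2 ≤ r)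
    (q : Fin r → ℝ) (hq : ∀ m, 0 < q m) (hqsum : ∑ m, q m = 1)
    (c : Fin r → ℂ) (hc : ∀ m, ‖c m‖ < 1) (hcsum : ∑ m, c m = 1) :
    (∃! F : C(Set.Icc (0 : ℝ) 1, ℂ), SatisfiesDeRham q c F) ∧
    (∀ F : C(Set.Icc (0 : ℝ) 1, ℂ), SatisfiesDeRham q c F →
      F ⟨0, Set.mem_Icc.mpr ⟨le_refl 0, zero_le_one⟩⟩ = 0 ∧
      F ⟨1, Set.mem_Icc.mpr ⟨zero_le_one, le_refl 1⟩⟩ = 1) := by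
  have hr0 : 0 < r := by omega
  have hend : ∀ F : C(Set.Icc (0 : ℝ) 1, ℂ), SatisfiesDeRham q c F →
      F ⟨0, Set.mem_Icc.mpr ⟨le_refl 0, zero_le_one⟩⟩ = 0 ∧
      F ⟨1, Set.mem_Icc.mpr ⟨zero_le_one, le_refl 1⟩⟩ = 1 :=
    fun F hF => DeRhamAux.endpoints q c F hr0 hqsum hc hcsum hF
  refine ⟨?_, hend⟩
  -- the closed subspace S of continuous maps with prescribed endpoint values
  have hclosed : IsClosed {F : C(Set.Icc (0 : ℝ) 1, ℂ) |
      F ⟨0, Set.mem_Icc.mpr ⟨le_refl 0, zero_le_one⟩⟩ = 0 ∧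
      F ⟨1, Set.mem_Icc.mpr ⟨zero_le_one, le_refl 1⟩⟩ = 1} := by
    rw [Set.setOf_and]
    exact (isClosed_eq (continuous_eval_const _) continuous_const).inter
      (isClosed_eq (continuous_eval_const _) continuous_const)
  haveI : CompleteSpace {F : C(Set.Icc (0 : ℝ) 1, ℂ) //
      F ⟨0, Set.mem_Icc.mpr ⟨le_refl 0, zero_le_one⟩⟩ = 0 ∧
      F ⟨1, Set.mem_Icc.mpr ⟨zero_le_one, le_refl 1⟩⟩ = 1} :=
    hclosed.completeSpace_coe
  haveI : Nonempty {F : C(Set.Icc (0 : ℝ) 1, ℂ) //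
      F ⟨0, Set.mem_Icc.mpr ⟨le_refl 0, zero_le_one⟩⟩ = 0 ∧
      F ⟨1, Set.mem_Icc.mpr ⟨zero_le_one, le_refl 1⟩⟩ = 1} :=
    ⟨⟨⟨fun t => ((t : ℝ) : ℂ), Complex.continuous_ofReal.comp continuous_subtype_val⟩,
      by simp, by simp⟩⟩
  set T : {F : C(Set.Icc (0 : ℝ) 1, ℂ) //
      F ⟨0, Set.mem_Icc.mpr ⟨le_refl 0, zero_le_one⟩⟩ = 0 ∧
      F ⟨1, Set.mem_Icc.mpr ⟨zero_le_one, le_refl 1⟩⟩ = 1} →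
      {F : C(Set.Icc (0 : ℝ) 1, ℂ) //
      F ⟨0, Set.mem_Icc.mpr ⟨le_refl 0, zero_le_one⟩⟩ = 0 ∧
      F ⟨1, Set.mem_Icc.mpr ⟨zero_le_one, le_refl 1⟩⟩ = 1} :=
    fun F => ⟨⟨fun x => DeRhamAux.DG q c F.1 (r-1) ↑x,
      (DeRhamAux.DG_continuous q c F.1 hq F.2.1 F.2.2 (r-1) (by omega)).comp
        continuous_subtype_val⟩,
      DeRhamAux.DG_at_zero q c F.1 hr0 hq F.2.1 F.2.2,
      DeRhamAux.DG_at_one q c F.1 hr0 hq hqsum hcsum F.2.1 F.2.2⟩ with hT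
  set K : ℝ≥0 := Finset.univ.sup (fun m => ‖c m‖₊) with hKdef
  have hKc : ∀ m, ‖c m‖₊ ≤ K := fun m => by
    rw [hKdef]; exact Finset.le_sup (f := fun m => ‖c m‖₊) (Finset.mem_univ m)
  have hK1 : K < 1 := by
    rw [hKdef]
    have hbot : (⊥ : ℝ≥0) < 1 := zero_lt_one
    refine (Finset.sup_lt_iff hbot).2 fun m _ => ?_
    have h1 : ‖c m‖ < 1 := by exact hc m
    exact_mod_cast h1
  have hlip : LipschitzWith K T := by
    apply LipschitzWith.of_dist_le_mul
    intro F G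
    rw [Subtype.dist_eq, Subtype.dist_eq]
    refine (ContinuousMap.dist_le (mul_nonneg K.coe_nonneg dist_nonneg)).2 fun x => ?_
    exact DeRhamAux.DG_dist_le q c K hKc F.1 G.1 (r-1) ↑x
  have cw : ContractingWith K T := ⟨hK1, hlip⟩
  set Fs := ContractingWith.fixedPoint T cw with hFs
  have hfixpt : T Fs = Fs := cw.fixedPoint_isFixedPt
  have hfixEval : ∀ x : Set.Icc (0:ℝ) 1, DeRhamAux.DG q c Fs.1 (r-1) ↑x = Fs.1 x :=
    fun x => congrArg (fun (G : {F : C(Set.Icc (0 : ℝ) 1, ℂ) //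
      F ⟨0, Set.mem_Icc.mpr ⟨le_refl 0, zero_le_one⟩⟩ = 0 ∧
      F ⟨1, Set.mem_Icc.mpr ⟨zero_le_one, le_refl 1⟩⟩ = 1}) => G.1 x) hfixpt
  refine ⟨Fs.1, DeRhamAux.satisfies_of_DG q c Fs.1 hr0 hq Fs.2.1 Fs.2.2 hfixEval, ?_⟩
  intro F' hF'
  obtain ⟨h0, h1⟩ := hend F' hF'
  have hfix' : T ⟨F', h0, h1⟩ = ⟨F', h0, h1⟩ := by
    apply Subtype.ext
    apply ContinuousMap.ext
    intro x
    exact DeRhamAux.DG_of_satisfies q c F' hr0 hq hqsum hF' h0 h1 x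
  have huniq := cw.fixedPoint_unique hfix'
  exact congrArg Subtype.val huniq
end

section
/- Let r ≥ 2 and let p_0,…,p_{r−1} ∈ (0,1) satisfy Σ_m p_m = 1. For every real χ with max_m p_m < χ < 1 there exists a unique d > 0 such that χ^d = Σ_{m=0}^{r−1} p_m^d, and this unique solution satisfies d > 1. -/
open scoped BigOperators

/-- Let `r ≥ 2` and let `p_0, …, p_{r-1} ∈ (0,1)` with `∑ p_m = 1`.  For every real `χ`
with `max_m p_m < χ < 1` there exists a unique `d > 0` such that
`χ ^ d = ∑_m p_m ^ d`, and this unique solution satisfies `d > 1`.  (This is the equation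
determining the Hausdorff dimension of the fractal curve of a hydrodynamic mode.) -/
theorem hausdorffDimension_equation_existsUnique (r : ℕ) (hr : 2 ≤ r)
    (p : Fin r → ℝ) (hp : ∀ m, p m ∈ Set.Ioo (0 : ℝ) 1) (hsum : ∑ m, p m = 1)
    (χ : ℝ) (hχlo : ∀ m, p m < χ) (hχhi : χ < 1) :
    (∃! d : ℝ, 0 < d ∧ χ ^ d = ∑ m, p m ^ d) ∧
    (∀ d : ℝ, 0 < d → χ ^ d = ∑ m, p m ^ d → 1 < d) := by
  have hr0 : 0 < r := by omega
  have hne : (Finset.univ : Finset (Fin r)).Nonempty := ⟨⟨0, hr0⟩, Finset.mem_univ _⟩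
  have hχ0 : 0 < χ := lt_trans (hp ⟨0, hr0⟩).1 (hχlo _)
  set q : Fin r → ℝ := fun m => p m / χ with hq
  have hq0 : ∀ m, 0 < q m := fun m => div_pos (hp m).1 hχ0
  have hq1 : ∀ m, q m < 1 := fun m => (div_lt_one hχ0).2 (hχlo m)
  set g : ℝ → ℝ := fun d => ∑ m, q m ^ d with hgdef
  have hganti : StrictAnti g := by
    intro x y hxy
    exact Finset.sum_lt_sum_of_nonempty hne
      (fun m _ => Real.rpow_lt_rpow_of_exponent_gt (hq0 m) (hq1 m) hxy)
  have hequiv : ∀ d : ℝ, (χ ^ d = ∑ m, p m ^ d) ↔ g d = 1 := by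
    intro d
    have hχd : (0 : ℝ) < χ ^ d := Real.rpow_pos_of_pos hχ0 d
    have h1 : ∑ m, p m ^ d = χ ^ d * g d := by
      simp only [hgdef, Finset.mul_sum]
      refine Finset.sum_congr rfl fun m _ => ?_
      rw [← Real.mul_rpow (le_of_lt hχ0) (le_of_lt (hq0 m))]
      congr 1
      field_simp [hq]
      simp only [hq]; field_simp
    constructor
    · intro h
      have h2 : χ ^ d * 1 = χ ^ d * g d := by rw [mul_one]; exact h.trans h1
      exact (mul_left_cancel₀ (ne_of_gt hχd) h2).symm
    · intro h; rw [h1, h, mul_one]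
  have hg1 : 1 < g 1 := by
    have hE : g 1 = 1 / χ := by
      simp only [hgdef, Real.rpow_one, hq]
      rw [← Finset.sum_div, hsum]
    rw [hE, lt_div_iff₀ hχ0, one_mul]; exact hχhi
  -- find D > 1 with g D < 1
  have htend : Filter.Tendsto g Filter.atTop (nhds 0) := by
    have h0 : (0 : ℝ) = ∑ _m : Fin r, (0 : ℝ) := by simp
    rw [h0]
    refine tendsto_finset_sum _ fun m _ => ?_
    exact tendsto_rpow_atTop_of_base_lt_one _ (by linarith [hq0 m]) (hq1 m)
  have hDex : ∃ D : ℝ, 1 < D ∧ g D < 1 := by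
    have h1 : ∀ᶠ d in Filter.atTop, g d < 1 :=
      htend.eventually_lt_const one_pos
    have h2 : ∀ᶠ d : ℝ in Filter.atTop, 1 < d := Filter.eventually_gt_atTop 1
    obtain ⟨D, hD1, hD2⟩ := (h2.and h1).exists
    exact ⟨D, hD1, hD2⟩
  obtain ⟨D, hD1, hDlt⟩ := hDex
  have hgcont : Continuous g := by
    refine continuous_finset_sum _ fun m _ => ?_
    have hE : (fun d : ℝ => q m ^ d) = fun d => Real.exp (Real.log (q m) * d) := by
      funext d; rw [Real.rpow_def_of_pos (hq0 m)]
    show Continuous (fun d : ℝ => q m ^ d)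
    rw [hE]
    exact Real.continuous_exp.comp (continuous_const.mul continuous_id)
  obtain ⟨d, hdmem, hgd⟩ :=
    intermediate_value_Icc' (le_of_lt hD1) hgcont.continuousOn
      (Set.mem_Icc.2 ⟨le_of_lt hDlt, le_of_lt hg1⟩)
  have hd1 : 1 < d := by
    have : g d < g 1 := by rw [hgd]; exact hg1
    exact hganti.lt_iff_gt.mp this
  constructor
  · refine ⟨d, ⟨by linarith, (hequiv d).2 hgd⟩, ?_⟩
    rintro y ⟨hy0, hyeq⟩
    exact hganti.injective (((hequiv y).1 hyeq).trans hgd.symm)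
  · intro e he0 heeq
    have : g e < g 1 := by rw [(hequiv e).1 heeq]; exact hg1
    exact hganti.lt_iff_gt.mp this
end

section
/- (Theorem 2) With D_H(k) defined for small nonzero k as the unique d > 0 satisfying |χ_k|^d = Σ_j p_j^d, the limit lim_{k→0} (D_H(k) − 1)/k² exists and equals 𝒟/λ⁺; equivalently, the diffusion coefficient is given by 𝒟 = λ⁺ · lim_{k→0} (D_H(k) − 1)/k². -/
open scoped BigOperators

/-- The eigenvalue `χ_k = ∑_{j=-s}^{s} p_j e^{-i k j}` of the hydrodynamic mode of
diffusion with wavenumber `k`, for an `r`-adic random walk with `r = 2s + 1`. -/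
noncomputable def chi (s : ℕ) (p : ℤ → ℝ) (k : ℝ) : ℂ :=
  ∑ j ∈ Finset.Icc (-(s : ℤ)) (s : ℤ),
    (p j : ℂ) * Complex.exp (-Complex.I * (k : ℂ) * (j : ℂ))

/-- The diffusion coefficient `𝒟 = ½ ∑_j j² p_j - ½ (∑_j j p_j)²`. -/
noncomputable def diffCoeff (s : ℕ) (p : ℤ → ℝ) : ℝ :=
  (1 / 2) * (∑ j ∈ Finset.Icc (-(s : ℤ)) (s : ℤ), (j : ℝ) ^ 2 * p j) -
    (1 / 2) * (∑ j ∈ Finset.Icc (-(s : ℤ)) (s : ℤ), (j : ℝ) * p j) ^ 2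

/-- The positive Lyapunov exponent `λ⁺ = ∑_j p_j ln (1 / p_j)` of the `r`-adic
multi-baker map. -/
noncomputable def lyapunov (s : ℕ) (p : ℤ → ℝ) : ℝ :=
  ∑ j ∈ Finset.Icc (-(s : ℤ)) (s : ℤ), p j * Real.log (1 / p j)

open Filter

/-- `sin (k c) / k → c` as `k → 0`. -/
private lemma tendsto_sin_mul_div (c : ℝ) :
    Tendsto (fun k : ℝ => Real.sin (k * c) / k) (nhdsWithin 0 {(0 : ℝ)}ᶜ) (nhds c) := by
  have hd : HasDerivAt (fun k : ℝ => Real.sin (k * c)) c 0 := by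
    have h1 : HasDerivAt (fun k : ℝ => k * c) c 0 := by
      simpa using (hasDerivAt_id (0 : ℝ)).mul_const c
    have h2 := (Real.hasDerivAt_sin ((0 : ℝ) * c)).comp 0 h1
    simpa [Function.comp_def] using h2
  have h := hasDerivAt_iff_tendsto_slope.1 hd
  refine h.congr' ?_
  filter_upwards [self_mem_nhdsWithin] with k hk
  simp [slope_def_field]

/-- `(cos (k c) - 1) / k² → -c²/2` as `k → 0`. -/
private lemma tendsto_cos_mul_div (c : ℝ) :
    Tendsto (fun k : ℝ => (Real.cos (k * c) - 1) / k ^ 2) (nhdsWithin 0 {(0 : ℝ)}ᶜ)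
      (nhds (-(c ^ 2) / 2)) := by
  have h1 := tendsto_sin_mul_div (c / 2)
  have h2 : Tendsto (fun k : ℝ => -2 * (Real.sin (k * (c / 2)) / k) ^ 2)
      (nhdsWithin 0 {(0 : ℝ)}ᶜ) (nhds (-2 * (c / 2) ^ 2)) := (h1.pow 2).const_mul (-2)
  have hval : -2 * (c / 2) ^ 2 = -(c ^ 2) / 2 := by ring
  rw [hval] at h2
  refine h2.congr' ?_
  filter_upwards [self_mem_nhdsWithin] with k hk
  have hk0 : k ≠ 0 := hk
  have hcos : Real.cos (k * c) - 1 = -2 * Real.sin ((k * c) / 2) ^ 2 := by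
    have := Real.sin_sq_eq_half_sub ((k * c) / 2)
    rw [this]; ring_nf
  have harg : (k * c) / 2 = k * (c / 2) := by ring
  rw [harg] at hcos
  field_simp [hcos]
  rw [← harg] at hcos; linarith

/-- The modulus squared of `chi` in terms of real trigonometric sums. -/
private lemma abs_chi_sq (s : ℕ) (p : ℤ → ℝ) (k : ℝ) :
    (‖chi s p k‖) ^ 2 =
      (∑ j ∈ Finset.Icc (-(s : ℤ)) (s : ℤ), p j * Real.cos (k * (j : ℝ))) ^ 2 +
      (∑ j ∈ Finset.Icc (-(s : ℤ)) (s : ℤ), p j * Real.sin (k * (j : ℝ))) ^ 2 := by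
  set S : Finset ℤ := Finset.Icc (-(s : ℤ)) (s : ℤ)
  have hterm : ∀ j ∈ S, (p j : ℂ) * Complex.exp (-Complex.I * (k : ℂ) * (j : ℂ)) =
      ((p j * Real.cos (k * (j : ℝ)) : ℝ) : ℂ) -
        ((p j * Real.sin (k * (j : ℝ)) : ℝ) : ℂ) * Complex.I := by
    intro j _
    have hexp : Complex.exp (-Complex.I * (k : ℂ) * (j : ℂ)) =
        ((Real.cos (k * (j : ℝ)) : ℂ) - (Real.sin (k * (j : ℝ)) : ℂ) * Complex.I) := by
      have h1 : (-Complex.I * (k : ℂ) * (j : ℂ))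
          = ((-(k * ((j : ℤ) : ℝ)) : ℝ) : ℂ) * Complex.I := by
        push_cast; ring
      rw [h1, Complex.exp_mul_I, ← Complex.ofReal_cos, ← Complex.ofReal_sin,
        Real.cos_neg, Real.sin_neg]
      push_cast; ring
    rw [hexp]
    push_cast; ring
  have hchi : chi s p k =
      ((∑ j ∈ S, p j * Real.cos (k * (j : ℝ)) : ℝ) : ℂ) -
        ((∑ j ∈ S, p j * Real.sin (k * (j : ℝ)) : ℝ) : ℂ) * Complex.I := by
    show (∑ j ∈ S, (p j : ℂ) * Complex.exp (-Complex.I * (k : ℂ) * (j : ℂ))) = _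
    rw [Finset.sum_congr rfl hterm, Finset.sum_sub_distrib]
    congr 1
    · push_cast; rfl
    · rw [← Finset.sum_mul]
      congr 1
      push_cast; rfl
  rw [Complex.sq_norm, hchi, Complex.normSq_apply]
  simp only [Complex.sub_re, Complex.sub_im, Complex.ofReal_re, Complex.ofReal_im,
    Complex.mul_re, Complex.mul_im, Complex.I_re, Complex.I_im]
  ring

/-- The limit of `log |χ_k| / k²` as `k → 0` is `-𝒟`. -/
private lemma tendsto_log_abs_chi (s : ℕ) (p : ℤ → ℝ)
    (hp : ∀ j ∈ Finset.Icc (-(s : ℤ)) (s : ℤ), 0 < p j)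
    (hsum : ∑ j ∈ Finset.Icc (-(s : ℤ)) (s : ℤ), p j = 1) :
    Tendsto (fun k : ℝ => Real.log (‖chi s p k‖) / k ^ 2)
      (nhdsWithin 0 {(0 : ℝ)}ᶜ) (nhds (-diffCoeff s p)) := by
  set S : Finset ℤ := Finset.Icc (-(s : ℤ)) (s : ℤ) with hSdef
  set m1 : ℝ := ∑ j ∈ S, (j : ℝ) * p j with hm1
  set m2 : ℝ := ∑ j ∈ S, (j : ℝ) ^ 2 * p j with hm2
  set Dc : ℝ := diffCoeff s p with hDcdef
  have hDc' : Dc = m2 / 2 - m1 ^ 2 / 2 := by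
    rw [hDcdef]; unfold diffCoeff; rw [hm1, hm2]; ring
  set u : ℝ → ℝ := fun k => ∑ j ∈ S, p j * Real.cos (k * (j : ℝ)) with hu
  set v : ℝ → ℝ := fun k => ∑ j ∈ S, p j * Real.sin (k * (j : ℝ)) with hv
  have habs2 : ∀ k : ℝ, (‖chi s p k‖) ^ 2 = u k ^ 2 + v k ^ 2 := fun k =>
    abs_chi_sq s p k
  have hφ_eq : ∀ k : ℝ, Real.log (‖chi s p k‖) =
      Real.log (u k ^ 2 + v k ^ 2) / 2 := by
    intro k
    have h1 : ‖chi s p k‖ = Real.sqrt (u k ^ 2 + v k ^ 2) := by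
      rw [← habs2 k, Real.sqrt_sq (norm_nonneg _)]
    rw [h1, Real.log_sqrt (by positivity)]
  have hucont : Continuous u := by
    rw [hu]
    exact continuous_finset_sum S fun j _ =>
      continuous_const.mul (Real.continuous_cos.comp (continuous_id.mul continuous_const))
  have hvcont : Continuous v := by
    rw [hv]
    exact continuous_finset_sum S fun j _ =>
      continuous_const.mul (Real.continuous_sin.comp (continuous_id.mul continuous_const))
  have hu0 : u 0 = 1 := by rw [hu]; simpa using hsum
  have hv0 : v 0 = 0 := by rw [hv]; simp
  have hLu : Tendsto (fun k : ℝ => (u k - 1) / k ^ 2) (nhdsWithin 0 {(0 : ℝ)}ᶜ)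
      (nhds (-m2 / 2)) := by
    have h1 : Tendsto (fun k : ℝ => ∑ j ∈ S, p j * ((Real.cos (k * (j : ℝ)) - 1) / k ^ 2))
        (nhdsWithin 0 {(0 : ℝ)}ᶜ) (nhds (∑ j ∈ S, p j * (-((j : ℝ) ^ 2) / 2))) :=
      tendsto_finset_sum S fun j _ => (tendsto_cos_mul_div (j : ℝ)).const_mul (p j)
    have heqlim : (∑ j ∈ S, p j * (-((j : ℝ) ^ 2) / 2)) = -m2 / 2 := by
      rw [hm2, neg_div, Finset.sum_div, ← Finset.sum_neg_distrib]
      exact Finset.sum_congr rfl fun j _ => by ring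
    rw [← heqlim]
    refine h1.congr fun k => ?_
    have hu1 : u k - 1 = ∑ j ∈ S, (p j * Real.cos (k * (j : ℝ)) - p j) := by
      rw [Finset.sum_sub_distrib, hsum, hu]
    rw [hu1, Finset.sum_div]
    exact Finset.sum_congr rfl fun j _ => by ring
  have hLv : Tendsto (fun k : ℝ => v k / k) (nhdsWithin 0 {(0 : ℝ)}ᶜ) (nhds m1) := by
    have h1 : Tendsto (fun k : ℝ => ∑ j ∈ S, p j * (Real.sin (k * (j : ℝ)) / k))
        (nhdsWithin 0 {(0 : ℝ)}ᶜ) (nhds (∑ j ∈ S, p j * (j : ℝ))) :=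
      tendsto_finset_sum S fun j _ => (tendsto_sin_mul_div (j : ℝ)).const_mul (p j)
    have heqlim : (∑ j ∈ S, p j * (j : ℝ)) = m1 := by
      rw [hm1]; exact Finset.sum_congr rfl fun j _ => by ring
    rw [← heqlim]
    refine h1.congr fun k => ?_
    rw [hv, Finset.sum_div]
    exact Finset.sum_congr rfl fun j _ => by ring
  have hLt : Tendsto (fun k : ℝ => (u k ^ 2 + v k ^ 2 - 1) / k ^ 2)
      (nhdsWithin 0 {(0 : ℝ)}ᶜ) (nhds (-2 * Dc)) := by
    have hcu : Tendsto u (nhdsWithin 0 {(0 : ℝ)}ᶜ) (nhds 1) := by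
      have := hucont.tendsto 0
      rw [hu0] at this
      exact this.mono_left nhdsWithin_le_nhds
    have h1 : Tendsto (fun k : ℝ => ((u k - 1) / k ^ 2) * (u k + 1) + (v k / k) ^ 2)
        (nhdsWithin 0 {(0 : ℝ)}ᶜ) (nhds ((-m2 / 2) * (1 + 1) + m1 ^ 2)) :=
      (hLu.mul (hcu.add_const 1)).add (hLv.pow 2)
    have hval : (-m2 / 2) * (1 + 1) + m1 ^ 2 = -2 * Dc := by rw [hDc']; ring
    rw [hval] at h1
    refine h1.congr' ?_
    filter_upwards [self_mem_nhdsWithin] with k hk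
    have hk0 : k ≠ 0 := hk
    field_simp
    ring
  set G : ℝ → ℝ := fun t => if t = 0 then 1 else Real.log (1 + t) / t with hG
  have hGlim : Tendsto G (nhds 0) (nhds 1) := by
    rw [← nhdsNE_sup_pure (0 : ℝ), tendsto_sup]
    constructor
    · have hd : HasDerivAt (fun t : ℝ => Real.log (1 + t)) 1 0 := by
        have h1 : HasDerivAt (fun t : ℝ => (1 : ℝ) + t) 1 0 := by
          simpa using (hasDerivAt_id (0 : ℝ)).const_add (1 : ℝ)
        have h2 : HasDerivAt Real.log 1 ((1 : ℝ) + 0) := by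
          simpa using Real.hasDerivAt_log (by norm_num : ((1 : ℝ) + 0) ≠ 0)
        simpa [Function.comp_def] using h2.comp 0 h1
      have h := hasDerivAt_iff_tendsto_slope.1 hd
      refine h.congr' ?_
      filter_upwards [self_mem_nhdsWithin] with t ht
      have ht0 : t ≠ 0 := ht
      simp [hG, slope_def_field, if_neg ht0]
    · have h0 : G 0 = 1 := by rw [hG]; simp
      rw [← h0]
      exact tendsto_pure_nhds G 0
  have hGid : ∀ t : ℝ, Real.log (1 + t) = G t * t := by
    intro t
    by_cases ht : t = 0
    · simp [hG, ht]
    · simp only [hG, if_neg ht]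
      field_simp
  have htc : Tendsto (fun k : ℝ => u k ^ 2 + v k ^ 2 - 1) (nhdsWithin 0 {(0 : ℝ)}ᶜ)
      (nhds 0) := by
    have hc : Continuous fun k : ℝ => u k ^ 2 + v k ^ 2 - 1 :=
      ((hucont.pow 2).add (hvcont.pow 2)).sub continuous_const
    have h0 := hc.tendsto 0
    simp only [hu0, hv0] at h0
    norm_num at h0
    exact h0.mono_left nhdsWithin_le_nhds
  have hGt : Tendsto (fun k : ℝ => G (u k ^ 2 + v k ^ 2 - 1)) (nhdsWithin 0 {(0 : ℝ)}ᶜ)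
      (nhds 1) := hGlim.comp htc
  have h1 : Tendsto (fun k : ℝ =>
      (G (u k ^ 2 + v k ^ 2 - 1) * ((u k ^ 2 + v k ^ 2 - 1) / k ^ 2)) / 2)
      (nhdsWithin 0 {(0 : ℝ)}ᶜ) (nhds ((1 * (-2 * Dc)) / 2)) := (hGt.mul hLt).div_const 2
  have hval : (1 * (-2 * Dc)) / 2 = -Dc := by ring
  rw [hval] at h1
  refine h1.congr fun k => ?_
  rw [hφ_eq k]
  have hrw : u k ^ 2 + v k ^ 2 = 1 + (u k ^ 2 + v k ^ 2 - 1) := by ring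
  rw [hrw, hGid]
  ring

/-- Positivity of the Lyapunov exponent. -/
private lemma lyapunov_pos (s : ℕ) (hs : 1 ≤ s) (p : ℤ → ℝ)
    (hp : ∀ j ∈ Finset.Icc (-(s : ℤ)) (s : ℤ), 0 < p j)
    (hsum : ∑ j ∈ Finset.Icc (-(s : ℤ)) (s : ℤ), p j = 1) :
    0 < lyapunov s p := by
  set S : Finset ℤ := Finset.Icc (-(s : ℤ)) (s : ℤ) with hSdef
  have h0S : (0 : ℤ) ∈ S := by simp [hSdef, Finset.mem_Icc]
  have h1S : (1 : ℤ) ∈ S := by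
    simp only [hSdef, Finset.mem_Icc]
    omega
  have hSne : S.Nonempty := ⟨0, h0S⟩
  have hplt1 : ∀ j ∈ S, p j < 1 := by
    intro j hj
    have hex : ∃ i, i ∈ S ∧ i ≠ j := by
      by_cases hj0 : j = 0
      · exact ⟨1, h1S, by simp [hj0]⟩
      · exact ⟨0, h0S, fun h => hj0 h.symm⟩
    obtain ⟨i, hiS, hij⟩ := hex
    have := Finset.single_lt_sum (f := p) (i := j) (j := i) hij hj hiS (hp i hiS)
      (fun m hm _ => (hp m hm).le)
    rw [hsum] at this
    exact this
  unfold lyapunov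
  refine Finset.sum_pos (fun j hj => ?_) hSne
  have h1 := hp j hj
  have h2 := hplt1 j hj
  have hlog : 0 < Real.log (1 / p j) := by
    rw [one_div, Real.log_inv]
    have := Real.log_neg h1 h2
    linarith
  exact mul_pos h1 hlog

/-- The key limit: for any `c`, the quantity
`((1 + c k²) log|χ_k| - log (∑ p_j^(1 + c k²))) / k²` tends to `c λ⁺ - 𝒟`. -/
private lemma tendsto_key (s : ℕ) (p : ℤ → ℝ)
    (hp : ∀ j ∈ Finset.Icc (-(s : ℤ)) (s : ℤ), 0 < p j)
    (hsum : ∑ j ∈ Finset.Icc (-(s : ℤ)) (s : ℤ), p j = 1)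
    (hSne : (Finset.Icc (-(s : ℤ)) (s : ℤ)).Nonempty) (c : ℝ) :
    Tendsto (fun k : ℝ =>
      ((1 + c * k ^ 2) * Real.log (‖chi s p k‖) -
        Real.log (∑ j ∈ Finset.Icc (-(s : ℤ)) (s : ℤ), p j ^ (1 + c * k ^ 2))) / k ^ 2)
      (nhdsWithin 0 {(0 : ℝ)}ᶜ) (nhds (c * lyapunov s p - diffCoeff s p)) := by
  set S : Finset ℤ := Finset.Icc (-(s : ℤ)) (s : ℤ) with hSdef
  set lam : ℝ := lyapunov s p with hlamdef
  set Dc : ℝ := diffCoeff s p with hDcdef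
  set A : ℝ → ℝ := fun d => ∑ j ∈ S, p j ^ d with hA
  have hApos : ∀ d : ℝ, 0 < A d := fun d =>
    Finset.sum_pos (fun j hj => Real.rpow_pos_of_pos (hp j hj) d) hSne
  have hA1 : A 1 = 1 := by
    rw [hA]
    simp only [Real.rpow_one]
    exact hsum
  have hAderiv : HasDerivAt A (∑ j ∈ S, p j * Real.log (p j)) 1 := by
    rw [hA]
    have := HasDerivAt.fun_sum (u := S)
      (fun j hj => (Real.hasStrictDerivAt_const_rpow (hp j hj) 1).hasDerivAt)
    simpa [Real.rpow_one] using this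
  have hlam_eq : lam = -∑ j ∈ S, p j * Real.log (p j) := by
    rw [hlamdef]
    unfold lyapunov
    rw [← Finset.sum_neg_distrib]
    refine Finset.sum_congr rfl fun j _ => ?_
    rw [one_div, Real.log_inv]; ring
  have hψd : HasDerivAt (fun d : ℝ => Real.log (A d)) (-lam) 1 := by
    have h1 := hAderiv.log (by rw [hA1]; norm_num)
    rw [hA1, div_one] at h1
    rw [hlam_eq, neg_neg]
    exact h1
  have hψ1 : Real.log (A 1) = 0 := by rw [hA1, Real.log_one]
  set Ψ : ℝ → ℝ := fun e => if e = 0 then -lam else Real.log (A (1 + e)) / e with hΨ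
  have hΨlim : Tendsto Ψ (nhds 0) (nhds (-lam)) := by
    rw [← nhdsNE_sup_pure (0 : ℝ), tendsto_sup]
    constructor
    · have hd : HasDerivAt (fun e : ℝ => Real.log (A (1 + e))) (-lam) 0 := by
        have h1 : HasDerivAt (fun e : ℝ => (1 : ℝ) + e) 1 0 := by
          simpa using (hasDerivAt_id (0 : ℝ)).const_add (1 : ℝ)
        have h2 : HasDerivAt (fun d : ℝ => Real.log (A d)) (-lam) ((1 : ℝ) + 0) := by
          simpa using hψd
        simpa [Function.comp_def] using h2.comp 0 h1
      have h := hasDerivAt_iff_tendsto_slope.1 hd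
      refine h.congr' ?_
      filter_upwards [self_mem_nhdsWithin] with e he
      have he0 : e ≠ 0 := he
      simp [hΨ, slope_def_field, if_neg he0, hψ1]
    · have h0 : Ψ 0 = -lam := by rw [hΨ]; simp
      rw [← h0]
      exact tendsto_pure_nhds Ψ 0
  have hφlim := tendsto_log_abs_chi s p hp hsum
  have h1 : Tendsto (fun k : ℝ => 1 + c * k ^ 2) (nhdsWithin 0 {(0 : ℝ)}ᶜ) (nhds 1) := by
    have hc : Continuous fun k : ℝ => 1 + c * k ^ 2 :=
      continuous_const.add (continuous_const.mul (continuous_pow 2))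
    have h0 := hc.tendsto 0
    norm_num at h0
    exact h0.mono_left nhdsWithin_le_nhds
  have h2 : Tendsto (fun k : ℝ =>
      (1 + c * k ^ 2) * (Real.log (‖chi s p k‖) / k ^ 2))
      (nhdsWithin 0 {(0 : ℝ)}ᶜ) (nhds (1 * -Dc)) := h1.mul hφlim
  have h3 : Tendsto (fun k : ℝ => c * k ^ 2) (nhdsWithin 0 {(0 : ℝ)}ᶜ) (nhds 0) := by
    have hc : Continuous fun k : ℝ => c * k ^ 2 :=
      continuous_const.mul (continuous_pow 2)
    have h0 := hc.tendsto 0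
    norm_num at h0
    exact h0.mono_left nhdsWithin_le_nhds
  have h4 : Tendsto (fun k : ℝ => Ψ (c * k ^ 2) * c) (nhdsWithin 0 {(0 : ℝ)}ᶜ)
      (nhds (-lam * c)) := (hΨlim.comp h3).mul_const c
  have h5 := h2.sub h4
  have hval : 1 * -Dc - -lam * c = c * lam - Dc := by ring
  rw [hval] at h5
  refine h5.congr' ?_
  filter_upwards [self_mem_nhdsWithin] with k hk
  have hk0 : k ≠ 0 := hk
  show (1 + c * k ^ 2) * (Real.log (‖chi s p k‖) / k ^ 2) - Ψ (c * k ^ 2) * c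
      = ((1 + c * k ^ 2) * Real.log (‖chi s p k‖) -
          Real.log (A (1 + c * k ^ 2))) / k ^ 2
  by_cases hc : c = 0
  · subst hc
    simp [hΨ, hψ1]
  · have hck : c * k ^ 2 ≠ 0 := by positivity
    simp only [hΨ, if_neg hck]
    field_simp

/-- **Theorem 2.**  With `D_H(k)` defined for small nonzero `k` as the unique `d > 0`
satisfying `|χ_k|^d = ∑_j p_j^d`, the limit `lim_{k → 0} (D_H(k) - 1)/k²` exists and
equals `𝒟/λ⁺`; equivalently, the diffusion coefficient is
`𝒟 = λ⁺ · lim_{k → 0} (D_H(k) - 1)/k²`. -/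
theorem diffusion_eq_lyapunov_mul_limit (s : ℕ) (hs : 1 ≤ s) (p : ℤ → ℝ)
    (hp : ∀ j ∈ Finset.Icc (-(s : ℤ)) (s : ℤ), 0 < p j)
    (hsum : ∑ j ∈ Finset.Icc (-(s : ℤ)) (s : ℤ), p j = 1)
    (k₀ : ℝ) (hk₀ : 0 < k₀) (DH : ℝ → ℝ)
    (hDH : ∀ k : ℝ, 0 < |k| → |k| < k₀ →
      0 < DH k ∧
      ‖chi s p k‖ ^ DH k = ∑ j ∈ Finset.Icc (-(s : ℤ)) (s : ℤ), p j ^ DH k ∧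
      (∀ d : ℝ, 0 < d →
        ‖chi s p k‖ ^ d = ∑ j ∈ Finset.Icc (-(s : ℤ)) (s : ℤ), p j ^ d →
        d = DH k)) :
    ∃ L : ℝ,
      Filter.Tendsto (fun k : ℝ => (DH k - 1) / k ^ 2)
        (nhdsWithin 0 {(0 : ℝ)}ᶜ) (nhds L) ∧
      L = diffCoeff s p / lyapunov s p ∧
      diffCoeff s p = lyapunov s p * L := by
  classical
  set S : Finset ℤ := Finset.Icc (-(s : ℤ)) (s : ℤ) with hSdef
  have h0S : (0 : ℤ) ∈ S := by simp [hSdef, Finset.mem_Icc]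
  have hSne : S.Nonempty := ⟨0, h0S⟩
  have hlam : 0 < lyapunov s p := lyapunov_pos s hs p hp hsum
  set lam : ℝ := lyapunov s p with hlamdef
  set Dc : ℝ := diffCoeff s p with hDcdef
  set A : ℝ → ℝ := fun d => ∑ j ∈ S, p j ^ d with hA
  have hApos : ∀ d : ℝ, 0 < A d := fun d =>
    Finset.sum_pos (fun j hj => Real.rpow_pos_of_pos (hp j hj) d) hSne
  have hAcont : Continuous A := by
    rw [hA]
    exact continuous_finset_sum S fun j hj =>
      continuous_iff_continuousAt.2 fun x =>
        ((Real.hasStrictDerivAt_const_rpow (hp j hj) x).hasDerivAt.continuousAt)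
  set φ : ℝ → ℝ := fun k => Real.log (‖chi s p k‖) with hφ
  have key : ∀ c : ℝ, Tendsto
      (fun k : ℝ => ((1 + c * k ^ 2) * φ k - Real.log (A (1 + c * k ^ 2))) / k ^ 2)
      (nhdsWithin 0 {(0 : ℝ)}ᶜ) (nhds (c * lam - Dc)) := fun c =>
    tendsto_key s p hp hsum hSne c
  -- eventually |χ| > 0
  have hBpos : ∀ᶠ k in nhdsWithin (0 : ℝ) {(0 : ℝ)}ᶜ, 0 < ‖chi s p k‖ := by
    set u : ℝ → ℝ := fun k => ∑ j ∈ S, p j * Real.cos (k * (j : ℝ)) with hu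
    have hucont : Continuous u := by
      rw [hu]
      exact continuous_finset_sum S fun j _ =>
        continuous_const.mul (Real.continuous_cos.comp (continuous_id.mul continuous_const))
    have hu0 : u 0 = 1 := by rw [hu]; simpa using hsum
    have hcu : Tendsto u (nhds 0) (nhds 1) := by
      have := hucont.tendsto 0
      rwa [hu0] at this
    have hev : ∀ᶠ k in nhds (0 : ℝ), 0 < u k := hcu.eventually (eventually_gt_nhds one_pos)
    refine ((hev.filter_mono nhdsWithin_le_nhds)).mono fun k hk => ?_
    have h2 : 0 < (‖chi s p k‖) ^ 2 := by
      rw [abs_chi_sq s p k]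
      have : 0 ≤ (∑ j ∈ S, p j * Real.sin (k * (j : ℝ))) ^ 2 := sq_nonneg _
      nlinarith [sq_nonneg (u k)]
    rcases (norm_nonneg (chi s p k)).lt_or_eq with h | h
    · exact h
    · exfalso
      rw [← h] at h2
      norm_num at h2
  set L0 : ℝ := Dc / lam with hL0
  have hcan : L0 * lam = Dc := by rw [hL0]; exact div_mul_cancel₀ Dc hlam.ne'
  -- the sandwich
  have hkey : ∀ δ : ℝ, 0 < δ →
      ∀ᶠ k in nhdsWithin (0 : ℝ) {(0 : ℝ)}ᶜ, |(DH k - 1) / k ^ 2 - L0| ≤ δ := by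
    intro δ hδ
    have hplus := key (L0 + δ)
    have hminus := key (L0 - δ)
    have hval1 : (L0 + δ) * lam - Dc = δ * lam := by rw [add_mul, hcan]; ring
    have hval2 : (L0 - δ) * lam - Dc = -(δ * lam) := by rw [sub_mul, hcan]; ring
    rw [hval1] at hplus
    rw [hval2] at hminus
    have e1 : ∀ᶠ k in nhdsWithin (0 : ℝ) {(0 : ℝ)}ᶜ,
        0 < ((1 + (L0 + δ) * k ^ 2) * φ k - Real.log (A (1 + (L0 + δ) * k ^ 2))) / k ^ 2 :=
      hplus.eventually (eventually_gt_nhds (mul_pos hδ hlam))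
    have e2 : ∀ᶠ k in nhdsWithin (0 : ℝ) {(0 : ℝ)}ᶜ,
        ((1 + (L0 - δ) * k ^ 2) * φ k - Real.log (A (1 + (L0 - δ) * k ^ 2))) / k ^ 2 < 0 :=
      hminus.eventually (eventually_lt_nhds (neg_lt_zero.2 (mul_pos hδ hlam)))
    have e3 : ∀ᶠ k in nhdsWithin (0 : ℝ) {(0 : ℝ)}ᶜ, 0 < 1 + (L0 - δ) * k ^ 2 := by
      have hc : Continuous fun k : ℝ => 1 + (L0 - δ) * k ^ 2 :=
        continuous_const.add (continuous_const.mul (continuous_pow 2))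
      have h0 := hc.tendsto 0
      norm_num at h0
      exact (h0.eventually (eventually_gt_nhds one_pos)).filter_mono nhdsWithin_le_nhds
    have e4 : ∀ᶠ k in nhdsWithin (0 : ℝ) {(0 : ℝ)}ᶜ, |k| < k₀ := by
      have : ∀ᶠ k in nhds (0 : ℝ), |k| < k₀ := by
        filter_upwards [Metric.ball_mem_nhds (0 : ℝ) hk₀] with x hx
        simpa [Real.dist_eq] using hx
      exact this.filter_mono nhdsWithin_le_nhds
    filter_upwards [e1, e2, e3, e4, hBpos, self_mem_nhdsWithin] with k h1 h2 h3 h4 hB hkne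
    have hk0 : k ≠ 0 := hkne
    have hk2 : (0 : ℝ) < k ^ 2 := by positivity
    have hd12 : 1 + (L0 - δ) * k ^ 2 < 1 + (L0 + δ) * k ^ 2 := by nlinarith
    have h1' : 0 < (1 + (L0 + δ) * k ^ 2) * φ k - Real.log (A (1 + (L0 + δ) * k ^ 2)) := by
      have hmul := mul_pos h1 hk2
      rwa [div_mul_cancel₀ _ hk2.ne'] at hmul
    have h2' : (1 + (L0 - δ) * k ^ 2) * φ k - Real.log (A (1 + (L0 - δ) * k ^ 2)) < 0 := by
      rcases div_neg_iff.1 h2 with ⟨ha, hb⟩ | ⟨ha, hb⟩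
      · linarith
      · exact ha
    have hcont : Continuous fun d : ℝ => d * φ k - Real.log (A d) :=
      (continuous_id.mul continuous_const).sub (hAcont.log fun d => (hApos d).ne')
    have hivt := intermediate_value_Icc hd12.le hcont.continuousOn
    have h0mem : (0 : ℝ) ∈ Set.Icc
        ((1 + (L0 - δ) * k ^ 2) * φ k - Real.log (A (1 + (L0 - δ) * k ^ 2)))
        ((1 + (L0 + δ) * k ^ 2) * φ k - Real.log (A (1 + (L0 + δ) * k ^ 2))) :=
      ⟨h2'.le, h1'.le⟩
    obtain ⟨d', hd'mem, hd'0⟩ := hivt h0mem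
    have hd'pos : 0 < d' := lt_of_lt_of_le h3 hd'mem.1
    have heqn : ‖chi s p k‖ ^ d' = ∑ j ∈ S, p j ^ d' := by
      rw [Real.rpow_def_of_pos hB]
      have hφd : Real.log (‖chi s p k‖) * d' = Real.log (A d') := by
        have hz : d' * φ k - Real.log (A d') = 0 := hd'0
        rw [hφ] at hz
        linarith [hz]
      rw [hφd]
      have : Real.exp (Real.log (A d')) = A d' := Real.exp_log (hApos d')
      rw [this, hA]
    have hkabs : 0 < |k| := abs_pos.2 hk0
    have huniq := (hDH k hkabs h4).2.2 d' hd'pos heqn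
    have hlb : 1 + (L0 - δ) * k ^ 2 ≤ DH k := huniq ▸ hd'mem.1
    have hub : DH k ≤ 1 + (L0 + δ) * k ^ 2 := huniq ▸ hd'mem.2
    rw [abs_le]
    constructor
    · have h5 : L0 - δ ≤ (DH k - 1) / k ^ 2 := (le_div_iff₀ hk2).2 (by nlinarith)
      linarith
    · have h5 : (DH k - 1) / k ^ 2 ≤ L0 + δ := (div_le_iff₀ hk2).2 (by nlinarith)
      linarith
  have htend : Tendsto (fun k : ℝ => (DH k - 1) / k ^ 2) (nhdsWithin 0 {(0 : ℝ)}ᶜ)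
      (nhds L0) := by
    rw [Metric.tendsto_nhds]
    intro ε hε
    filter_upwards [hkey (ε / 2) (by positivity)] with k hk
    rw [Real.dist_eq]
    have h6 := abs_le.1 hk
    rw [abs_lt]
    constructor <;> linarith [h6.1, h6.2]
  refine ⟨L0, htend, hL0, ?_⟩
  rw [hL0, hDcdef, hlamdef]
  field_simp
  exact (mul_div_cancel_right₀ _ hlam.ne').symm
end

section
/- If the transition probabilities are symmetric, p_j = p_{−j} for all j, then the r-adic multi-baker map B_r : ℤ × [0,1) × [0,1) → ℤ × [0,1) × [0,1) preserves the product of the counting measure on ℤ with two-dimensional Lebesgue measure on [0,1)². -/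
open scoped BigOperators

/-- `P_m = ∑_{m' < m} p_{m' - (r-1)/2}` (with `s = (r-1)/2`), so `P_0 = 0`, `P_r = 1`. -/
noncomputable def Pcum (s : ℕ) (p : ℤ → ℝ) (m : ℕ) : ℝ :=
  ∑ m' ∈ Finset.range m, p ((m' : ℤ) - (s : ℤ))

/-- `S_m = ∑_{j = (r-1)/2 - m + 1}^{(r-1)/2} p_j` (with `s = (r-1)/2`). -/
noncomputable def Scum (s : ℕ) (p : ℤ → ℝ) (m : ℕ) : ℝ :=
  ∑ j ∈ Finset.Icc ((s : ℤ) - (m : ℤ) + 1) (s : ℤ), p j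

/-- The branch index of `x ∈ [0,1)`: the (unique) `m ∈ {0, …, r-1}` with
`P_m ≤ x < P_{m+1}`, where `r = 2s + 1`. -/
noncomputable def branchIndex (s : ℕ) (p : ℤ → ℝ) (x : ℝ) : ℕ :=
  sSup {m : ℕ | m < 2 * s + 1 ∧ Pcum s p m ≤ x}

/-- The `r`-adic multi-baker map `B_r` on `ℤ × [0,1) × [0,1)` (with `r = 2s + 1`):
if `P_m ≤ x < P_{m+1}` then
`B_r(n,x,y) = (n + m - (r-1)/2, (x - P_m)/p_{m-(r-1)/2}, p_{(r-1)/2-m} y + S_m)`. -/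
noncomputable def multiBaker (s : ℕ) (p : ℤ → ℝ) : ℤ × ℝ × ℝ → ℤ × ℝ × ℝ := fun z =>
  let m := branchIndex s p z.2.1
  (z.1 + (m : ℤ) - (s : ℤ),
    (z.2.1 - Pcum s p m) / p ((m : ℤ) - (s : ℤ)),
    p ((s : ℤ) - (m : ℤ)) * z.2.2 + Scum s p m)

open MeasureTheory Set

section Aux

variable (s : ℕ) (p : ℤ → ℝ)

lemma Pcum_zero : Pcum s p 0 = 0 := by simp [Pcum]

lemma Pcum_succ (m : ℕ) : Pcum s p (m + 1) = Pcum s p m + p ((m : ℤ) - s) :=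
  Finset.sum_range_succ _ m

lemma Scum_zero : Scum s p 0 = 0 := by
  simp only [Scum]
  rw [Finset.Icc_eq_empty (by omega), Finset.sum_empty]

lemma Scum_succ (m : ℕ) : Scum s p (m + 1) = p ((s : ℤ) - m) + Scum s p m := by
  simp only [Scum]
  have h1 : ((s : ℤ) - (m + 1 : ℕ) + 1) = (s : ℤ) - m := by push_cast; ring
  rw [h1]
  have h2 : Finset.Icc ((s : ℤ) - m) s = insert ((s : ℤ) - m) (Finset.Icc ((s : ℤ) - m + 1) s) := by
    ext k; simp only [Finset.mem_Icc, Finset.mem_insert]; omega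
  rw [h2, Finset.sum_insert (by simp only [Finset.mem_Icc]; omega)]

lemma Pcum_total : Pcum s p (2 * s + 1) = ∑ j ∈ Finset.Icc (-(s : ℤ)) (s : ℤ), p j := by
  unfold Pcum
  refine Finset.sum_nbij' (i := fun m => (m : ℤ) - s) (j := fun j => (j + s).toNat) ?_ ?_ ?_ ?_ ?_
  · intro a ha; simp only [Finset.mem_range] at ha; simp only [Finset.mem_Icc]; omega
  · intro a ha; simp only [Finset.mem_Icc] at ha; simp only [Finset.mem_range]; omega
  · intro a ha
    simp only [Finset.mem_range] at ha
    show ((a : ℤ) - (s : ℤ) + (s : ℤ)).toNat = a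
    omega
  · intro a ha
    simp only [Finset.mem_Icc] at ha
    show (((a + (s : ℤ)).toNat : ℕ) : ℤ) - (s : ℤ) = a
    omega
  · intro a _; rfl

lemma Scum_total : Scum s p (2 * s + 1) = ∑ j ∈ Finset.Icc (-(s : ℤ)) (s : ℤ), p j := by
  unfold Scum
  congr 1
  have : ((s : ℤ) - (2 * s + 1 : ℕ) + 1) = -(s : ℤ) := by push_cast; ring
  rw [this]

variable {s p} (hp : ∀ j ∈ Finset.Icc (-(s : ℤ)) (s : ℤ), 0 < p j)
include hp

lemma p_pos {m : ℕ} (hm : m < 2 * s + 1) : 0 < p ((m : ℤ) - s) := by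
  apply hp; simp only [Finset.mem_Icc]; omega

lemma Pcum_mono : ∀ {a b : ℕ}, a ≤ b → b ≤ 2 * s + 1 → Pcum s p a ≤ Pcum s p b := by
  intro a b hab hb
  induction b with
  | zero =>
    have : a = 0 := by omega
    subst this; exact le_refl _
  | succ n ih =>
    rcases Nat.lt_or_ge a (n + 1) with h' | h'
    · have h1 := ih (Nat.lt_succ_iff.mp h') (by omega)
      have h2 : 0 < p ((n : ℤ) - s) := p_pos hp (by omega)
      rw [Pcum_succ]; linarith
    · have : a = n + 1 := le_antisymm hab h'
      subst this; exact le_refl _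

lemma Pcum_strict {a b : ℕ} (hab : a < b) (hb : b ≤ 2 * s + 1) :
    Pcum s p a < Pcum s p b := by
  obtain ⟨k, rfl⟩ := Nat.exists_eq_add_of_lt hab
  have h1 : Pcum s p a ≤ Pcum s p (a + k) := Pcum_mono hp (by omega) (by omega)
  have h2 : Pcum s p (a + k + 1) = Pcum s p (a + k) + p (((a + k : ℕ) : ℤ) - s) :=
    Pcum_succ s p (a + k)
  have h3 : 0 < p (((a + k : ℕ) : ℤ) - s) := p_pos hp (by omega)
  rw [h2]; linarith

lemma branchIndex_eq {m : ℕ} {x : ℝ} (hm : m < 2 * s + 1)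
    (h1 : Pcum s p m ≤ x) (h2 : x < Pcum s p (m + 1)) : branchIndex s p x = m := by
  unfold branchIndex
  apply le_antisymm
  · refine csSup_le ⟨m, ⟨hm, h1⟩⟩ ?_
    rintro k ⟨hk1, hk2⟩
    by_contra hkm
    push_neg at hkm
    have : Pcum s p (m + 1) ≤ Pcum s p k := Pcum_mono hp (by omega) (by omega)
    linarith
  · exact le_csSup ⟨2 * s + 1, fun k hk => hk.1.le⟩ ⟨hm, h1⟩

lemma branchIndex_spec (htot : Pcum s p (2 * s + 1) = 1) {x : ℝ} (hx : x ∈ Ico (0 : ℝ) 1) :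
    branchIndex s p x < 2 * s + 1 ∧ Pcum s p (branchIndex s p x) ≤ x ∧
      x < Pcum s p (branchIndex s p x + 1) := by
  have hbi : branchIndex s p x = sSup {m : ℕ | m < 2 * s + 1 ∧ Pcum s p m ≤ x} := rfl
  set A := {m : ℕ | m < 2 * s + 1 ∧ Pcum s p m ≤ x} with hA
  have hne : A.Nonempty := by
    refine ⟨0, ?_⟩
    simp only [hA, Set.mem_setOf_eq]
    exact ⟨by omega, by rw [Pcum_zero]; exact hx.1⟩
  have hbdd : BddAbove A := ⟨2 * s + 1, fun k hk => hk.1.le⟩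
  have hmem : sSup A ∈ A := Nat.sSup_mem hne hbdd
  rw [hbi]
  refine ⟨hmem.1, hmem.2, ?_⟩
  by_contra hcon
  push_neg at hcon
  rcases Nat.lt_or_ge (sSup A + 1) (2 * s + 1) with h | h
  · have hmem2 : sSup A + 1 ∈ A := ⟨h, hcon⟩
    have := le_csSup hbdd hmem2
    omega
  · have heq : sSup A + 1 = 2 * s + 1 := by
      have := hmem.1
      omega
    rw [heq, htot] at hcon
    linarith [hx.2]

end Aux

lemma branchIndex_mono (s : ℕ) (p : ℤ → ℝ) : Monotone (branchIndex s p) := by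
  intro x y hxy
  unfold branchIndex
  rcases Set.eq_empty_or_nonempty {m : ℕ | m < 2 * s + 1 ∧ Pcum s p m ≤ x} with h | h
  · rw [h, csSup_empty]; exact Nat.zero_le _
  · exact csSup_le_csSup ⟨2 * s + 1, fun k hk => hk.1.le⟩ h
      (fun k hk => ⟨hk.1, hk.2.trans hxy⟩)

lemma multiBaker_measurable (s : ℕ) (p : ℤ → ℝ) : Measurable (multiBaker s p) := by
  have hb : Measurable fun z : ℤ × ℝ × ℝ => branchIndex s p z.2.1 :=
    (branchIndex_mono s p).measurable.comp (measurable_fst.comp measurable_snd)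
  unfold multiBaker
  refine Measurable.prod ?_ (Measurable.prod ?_ ?_)
  · exact (measurable_fst.add ((measurable_from_top (f := fun k : ℕ => (k : ℤ))).comp hb)).sub
      measurable_const
  · exact ((measurable_fst.comp measurable_snd).sub
      ((measurable_from_top (f := fun k : ℕ => Pcum s p k)).comp hb)).div
      ((measurable_from_top (f := fun k : ℕ => p ((k : ℤ) - s))).comp hb)
  · exact (((measurable_from_top (f := fun k : ℕ => p ((s : ℤ) - k))).comp hb).mul
      (measurable_snd.comp measurable_snd)).add
      ((measurable_from_top (f := fun k : ℕ => Scum s p k)).comp hb)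

section MeasureAux

variable {α β : Type*} [MeasurableSpace α] [MeasurableSpace β]

lemma smul_prod_meas (c : ENNReal) (μ : Measure α) (ν : Measure β) [SFinite ν] :
    (c • μ).prod ν = c • μ.prod ν := by
  ext t ht
  rw [Measure.smul_apply, Measure.prod_apply ht, Measure.prod_apply ht,
    lintegral_smul_measure]

lemma prod_smul_meas (c : ENNReal) (μ : Measure α) (ν : Measure β) [SFinite ν] :
    μ.prod (c • ν) = c • μ.prod ν := by
  ext t ht
  rw [Measure.smul_apply, Measure.prod_apply ht, Measure.prod_apply ht]
  simp only [Measure.smul_apply, smul_eq_mul]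
  rw [lintegral_const_mul c (measurable_measure_prodMk_left ht)]

instance : SigmaFinite (Measure.count : Measure ℤ) :=
  Measure.sigmaFinite_of_countable (Set.countable_range fun n : ℤ => ({n} : Set ℤ))
    (by rintro t ⟨n, rfl⟩; simp) (by ext n; simp)

lemma count_add_right (d : ℤ) :
    MeasurePreserving (fun n : ℤ => n + d) Measure.count Measure.count := by
  refine ⟨measurable_from_top, ?_⟩
  ext t ht
  rw [Measure.map_apply measurable_from_top ht]
  have himg : (fun n : ℤ => n + d) ⁻¹' t = (fun x : ℤ => x - d) '' t := by
    ext k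
    simp only [Set.mem_preimage, Set.mem_image]
    constructor
    · intro h; exact ⟨k + d, h, by ring⟩
    · rintro ⟨a, ha, rfl⟩; simpa using ha
  rw [himg, Measure.count_injective_image (fun a b h => by omega)]

lemma map_affine_volume (a b : ℝ) (ha : a ≠ 0) :
    Measure.map (fun x : ℝ => a * x + b) volume = ENNReal.ofReal |a⁻¹| • volume := by
  have hcomp : (fun x : ℝ => a * x + b) = (fun u => u + b) ∘ (fun x => a * x) := rfl
  rw [hcomp, ← Measure.map_map (measurable_add_const b) (measurable_const_mul a),
    Real.map_volume_mul_left ha, Measure.map_smul,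
    (measurePreserving_add_right volume b).map_eq]

end MeasureAux

/-- The branch affine map is measure preserving on the full space. -/
lemma branch_map_preserving (c P S : ℝ) (hc : 0 < c) :
    MeasurePreserving
      (fun z : ℤ × ℝ × ℝ => (z.1, (z.2.1 - P) / c, c * z.2.2 + S))
      (Measure.count.prod ((volume : Measure ℝ).prod volume))
      (Measure.count.prod ((volume : Measure ℝ).prod volume)) := by
  have hg : Measure.map (fun x : ℝ => (x - P) / c) volume = ENNReal.ofReal c • volume := by
    have : (fun x : ℝ => (x - P) / c) = fun x : ℝ => c⁻¹ * x + (-(P / c)) := by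
      funext x; field_simp; ring
    rw [this, map_affine_volume c⁻¹ _ (inv_ne_zero hc.ne'), inv_inv, abs_of_pos hc]
  have hh : Measure.map (fun y : ℝ => c * y + S) volume = ENNReal.ofReal c⁻¹ • volume := by
    rw [map_affine_volume c S hc.ne', abs_of_pos (inv_pos.mpr hc)]
  have hgm : Measurable fun x : ℝ => (x - P) / c :=
    (measurable_id.sub measurable_const).div_const c
  have hhm : Measurable fun y : ℝ => c * y + S :=
    (measurable_id.const_mul c).add_const S
  have h2 : Measure.map (Prod.map (fun x : ℝ => (x - P) / c) (fun y : ℝ => c * y + S))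
      ((volume : Measure ℝ).prod volume) = (volume : Measure ℝ).prod volume := by
    rw [← Measure.map_prod_map _ _ hgm hhm, hg, hh, smul_prod_meas, prod_smul_meas, smul_smul,
      ← ENNReal.ofReal_mul hc.le, mul_inv_cancel₀ hc.ne', ENNReal.ofReal_one, one_smul]
  have hmp : MeasurePreserving
      (Prod.map (fun x : ℝ => (x - P) / c) (fun y : ℝ => c * y + S))
      ((volume : Measure ℝ).prod volume) ((volume : Measure ℝ).prod volume) :=
    ⟨hgm.prodMap hhm, h2⟩
  have hfull := (MeasurePreserving.id (Measure.count : Measure ℤ)).prod hmp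
  have hco : (fun z : ℤ × ℝ × ℝ => (z.1, (z.2.1 - P) / c, c * z.2.2 + S)) =
      Prod.map (id : ℤ → ℤ) (Prod.map (fun x : ℝ => (x - P) / c) (fun y : ℝ => c * y + S)) := by
    funext z; rfl
  rw [hco]
  exact hfull

lemma mono_of_step (f : ℕ → ℝ) (r : ℕ) (h : ∀ k < r, f k ≤ f (k + 1)) :
    ∀ a b : ℕ, a ≤ b → b ≤ r → f a ≤ f b := by
  intro a b hab hbr
  induction b with
  | zero =>
    have : a = 0 := by omega
    subst this; exact le_refl _
  | succ n ih =>
    rcases Nat.lt_or_ge a (n + 1) with h' | h'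
    · exact (ih (Nat.lt_succ_iff.mp h') (by omega)).trans (h n (by omega))
    · have : a = n + 1 := le_antisymm hab h'
      subst this; exact le_refl _

lemma union_Ico_step (f : ℕ → ℝ) (r : ℕ) (h : ∀ k < r, f k ≤ f (k + 1)) :
    ⋃ m ∈ Finset.range r, Ico (f m) (f (m + 1)) = Ico (f 0) (f r) := by
  induction r with
  | zero => simp
  | succ n ih =>
    have h' : ∀ k < n, f k ≤ f (k + 1) := fun k hk => h k (by omega)
    rw [Finset.range_add_one, Finset.set_biUnion_insert, ih h', Set.union_comm,
      Ico_union_Ico_eq_Ico (mono_of_step f n h' 0 n (by omega) le_rfl) (h n (by omega))]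

lemma pairwise_Ico_disjoint (f : ℕ → ℝ) (r : ℕ)
    (hmono : ∀ a b : ℕ, a ≤ b → b ≤ r → f a ≤ f b) {a b : ℕ}
    (ha : a < r) (hb : b < r) (hab : a ≠ b) :
    Disjoint (Ico (f a) (f (a + 1))) (Ico (f b) (f (b + 1))) := by
  rw [Set.disjoint_left]
  rintro x ⟨ha1, ha2⟩ ⟨hb1, hb2⟩
  rcases lt_or_gt_of_ne hab with h | h
  · have : f (a + 1) ≤ f b := hmono (a + 1) b (by omega) (by omega)
    linarith
  · have : f (b + 1) ≤ f a := hmono (b + 1) a (by omega) (by omega)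
    linarith

/-- If the transition probabilities are symmetric, `p_j = p_{-j}` for all `j`, then the
`r`-adic multi-baker map preserves the product of the counting measure on `ℤ` with
two-dimensional Lebesgue measure on `[0,1)²`. -/
theorem multiBaker_measurePreserving (s : ℕ) (hs : 1 ≤ s) (p : ℤ → ℝ)
    (hp : ∀ j ∈ Finset.Icc (-(s : ℤ)) (s : ℤ), 0 < p j)
    (hsum : ∑ j ∈ Finset.Icc (-(s : ℤ)) (s : ℤ), p j = 1)
    (hsym : ∀ j : ℤ, p j = p (-j)) :
    MeasureTheory.MeasurePreserving (multiBaker s p)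
      ((MeasureTheory.Measure.count : MeasureTheory.Measure ℤ).prod
        ((MeasureTheory.volume.restrict (Set.Ico (0 : ℝ) 1)).prod
          (MeasureTheory.volume.restrict (Set.Ico (0 : ℝ) 1))))
      ((MeasureTheory.Measure.count : MeasureTheory.Measure ℤ).prod
        ((MeasureTheory.volume.restrict (Set.Ico (0 : ℝ) 1)).prod
          (MeasureTheory.volume.restrict (Set.Ico (0 : ℝ) 1)))) := by
  classical
  set r := 2 * s + 1 with hr
  have hPtot : Pcum s p r = 1 := by rw [hr, Pcum_total, hsum]
  have hStot : Scum s p r = 1 := by rw [hr, Scum_total, hsum]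
  have hsymc : ∀ m : ℕ, p ((s : ℤ) - m) = p ((m : ℤ) - s) := by
    intro m; rw [hsym ((s : ℤ) - m), neg_sub]
  have hcpos : ∀ m < r, 0 < p ((m : ℤ) - s) := fun m hm => p_pos hp hm
  have hT : Measurable (multiBaker s p) := multiBaker_measurable s p
  -- the ambient measure and partition sets
  set lam : Measure (ℤ × ℝ × ℝ) := Measure.count.prod ((volume : Measure ℝ).prod volume)
    with hlam
  set U : Set (ℤ × ℝ × ℝ) := univ ×ˢ (Ico (0 : ℝ) 1 ×ˢ Ico (0 : ℝ) 1) with hU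
  have hmu : (MeasureTheory.Measure.count : Measure ℤ).prod
      ((volume.restrict (Set.Ico (0 : ℝ) 1)).prod (volume.restrict (Set.Ico (0 : ℝ) 1)))
      = lam.restrict U := by
    rw [hlam, hU, ← Measure.prod_restrict, ← Measure.prod_restrict, Measure.restrict_univ]
  set E : ℕ → Set (ℤ × ℝ × ℝ) := fun m =>
    univ ×ˢ (Ico (Pcum s p m) (Pcum s p (m + 1)) ×ˢ Ico (0 : ℝ) 1) with hE
  set F : ℕ → Set (ℤ × ℝ × ℝ) := fun m =>
    univ ×ˢ (Ico (0 : ℝ) 1 ×ˢ Ico (Scum s p m) (Scum s p (m + 1))) with hF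
  set Tm : ℕ → ℤ × ℝ × ℝ → ℤ × ℝ × ℝ := fun m z =>
    (z.1 + (m : ℤ) - (s : ℤ), ((z.2.1 - Pcum s p m) / p ((m : ℤ) - s),
      p ((m : ℤ) - s) * z.2.2 + Scum s p m)) with hTmdef
  -- each branch map is measure preserving on lam
  have hTmp : ∀ m, m < r → MeasurePreserving (Tm m) lam lam := by
    intro m hm
    have hB := branch_map_preserving (p ((m : ℤ) - s)) (Pcum s p m) (Scum s p m) (hcpos m hm)
    have hA : MeasurePreserving (Prod.map (fun n : ℤ => n + ((m : ℤ) - s))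
        (id : ℝ × ℝ → ℝ × ℝ)) lam lam :=
      (count_add_right ((m : ℤ) - s)).prod
        (MeasurePreserving.id ((volume : Measure ℝ).prod volume))
    have hco : Tm m = (Prod.map (fun n : ℤ => n + ((m : ℤ) - s)) id) ∘
        (fun z : ℤ × ℝ × ℝ =>
          (z.1, (z.2.1 - Pcum s p m) / p ((m : ℤ) - s),
            p ((m : ℤ) - s) * z.2.2 + Scum s p m)) := by
      funext z
      simp only [hTmdef, Function.comp_apply, Prod.map, id]
      refine Prod.ext ?_ rfl
      show z.1 + (m : ℤ) - (s : ℤ) = z.1 + ((m : ℤ) - (s : ℤ))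
      ring
    rw [hco]
    exact hA.comp hB
  -- Scum step monotonicity
  have hSstep : ∀ k < r, Scum s p k ≤ Scum s p (k + 1) := by
    intro k hk
    rw [Scum_succ]
    have := (hsymc k) ▸ hcpos k hk
    linarith
  have hPstep : ∀ k < r, Pcum s p k ≤ Pcum s p (k + 1) := by
    intro k hk
    rw [Pcum_succ]
    linarith [hcpos k hk]
  have hPmono := mono_of_step (Pcum s p) r hPstep
  have hSmono := mono_of_step (Scum s p) r hSstep
  -- union identities
  have hPunion : ⋃ m ∈ Finset.range r, Ico (Pcum s p m) (Pcum s p (m + 1)) = Ico (0 : ℝ) 1 := by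
    have := union_Ico_step (Pcum s p) r hPstep
    rwa [Pcum_zero, hPtot] at this
  have hSunion : ⋃ m ∈ Finset.range r, Ico (Scum s p m) (Scum s p (m + 1)) = Ico (0 : ℝ) 1 := by
    have := union_Ico_step (Scum s p) r hSstep
    rwa [Scum_zero, hStot] at this
  have hUeqE : U = ⋃ m ∈ Finset.range r, E m := by
    ext z
    simp only [hU, hE, mem_prod, mem_univ, true_and, mem_iUnion, Finset.mem_range, exists_prop]
    constructor
    · rintro ⟨hx, hy⟩
      rw [← hPunion] at hx
      simp only [mem_iUnion, Finset.mem_range, exists_prop] at hx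
      obtain ⟨m, hm, hx⟩ := hx
      exact ⟨m, hm, hx, hy⟩
    · rintro ⟨m, hm, hx, hy⟩
      refine ⟨?_, hy⟩
      rw [← hPunion]
      simp only [mem_iUnion, Finset.mem_range, exists_prop]
      exact ⟨m, hm, hx⟩
  have hUeqF : U = ⋃ m ∈ Finset.range r, F m := by
    ext z
    simp only [hU, hF, mem_prod, mem_univ, true_and, mem_iUnion, Finset.mem_range, exists_prop]
    constructor
    · rintro ⟨hx, hy⟩
      rw [← hSunion] at hy
      simp only [mem_iUnion, Finset.mem_range, exists_prop] at hy
      obtain ⟨m, hm, hy⟩ := hy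
      exact ⟨m, hm, hx, hy⟩
    · rintro ⟨m, hm, hx, hy⟩
      refine ⟨hx, ?_⟩
      rw [← hSunion]
      simp only [mem_iUnion, Finset.mem_range, exists_prop]
      exact ⟨m, hm, hy⟩
  have hEmeas : ∀ m, MeasurableSet (E m) := fun m =>
    MeasurableSet.univ.prod (measurableSet_Ico.prod measurableSet_Ico)
  have hFmeas : ∀ m, MeasurableSet (F m) := fun m =>
    MeasurableSet.univ.prod (measurableSet_Ico.prod measurableSet_Ico)
  have hEdisj : ∀ a ∈ Finset.range r, ∀ b ∈ Finset.range r, a ≠ b → Disjoint (E a) (E b) := by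
    intro a ha b hb hab
    simp only [Finset.mem_range] at ha hb
    have hIco := pairwise_Ico_disjoint (Pcum s p) r hPmono ha hb hab
    rw [Set.disjoint_left] at hIco ⊢
    intro z hza hzb
    simp only [hE, mem_prod] at hza hzb
    exact hIco hza.2.1 hzb.2.1
  have hFdisj : ∀ a ∈ Finset.range r, ∀ b ∈ Finset.range r, a ≠ b → Disjoint (F a) (F b) := by
    intro a ha b hb hab
    simp only [Finset.mem_range] at ha hb
    have hIco := pairwise_Ico_disjoint (Scum s p) r hSmono ha hb hab
    rw [Set.disjoint_left] at hIco ⊢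
    intro z hza hzb
    simp only [hF, mem_prod] at hza hzb
    exact hIco hza.2.2 hzb.2.2
  -- the key branch identity
  have hkey : ∀ m, m < r → ∀ S : Set (ℤ × ℝ × ℝ),
      multiBaker s p ⁻¹' S ∩ E m = Tm m ⁻¹' (S ∩ F m) := by
    intro m hm S
    have hc := hcpos m hm
    have hSsucc : Scum s p (m + 1) = p ((m : ℤ) - s) + Scum s p m := by
      rw [Scum_succ, hsymc]
    have hPsucc : Pcum s p (m + 1) = Pcum s p m + p ((m : ℤ) - s) := Pcum_succ s p m
    ext z
    obtain ⟨n, x, y⟩ := z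
    simp only [hE, hF, Set.mem_inter_iff, Set.mem_preimage, mem_prod, mem_univ, true_and,
      mem_Ico, hTmdef]
    constructor
    · rintro ⟨hzS, ⟨hx1, hx2⟩, hy1, hy2⟩
      have hb : branchIndex s p x = m := branchIndex_eq hp hm hx1 hx2
      have hTz : multiBaker s p (n, x, y) =
          (n + (m : ℤ) - (s : ℤ), (x - Pcum s p m) / p ((m : ℤ) - s),
            p ((m : ℤ) - s) * y + Scum s p m) := by
        show (n + (branchIndex s p x : ℤ) - (s : ℤ),
          (x - Pcum s p (branchIndex s p x)) / p ((branchIndex s p x : ℤ) - s),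
          p ((s : ℤ) - (branchIndex s p x : ℤ)) * y + Scum s p (branchIndex s p x)) = _
        rw [hb, hsymc]
      refine ⟨?_, ⟨?_, ?_⟩, ?_, ?_⟩
      · rw [← hTz]; exact hzS
      · exact div_nonneg (by linarith) hc.le
      · rw [div_lt_one hc]; linarith
      · nlinarith
      · nlinarith
    · rintro ⟨hzS, ⟨hx1, hx2⟩, hy1, hy2⟩
      have hx1' : Pcum s p m ≤ x := by
        have := mul_nonneg hx1 hc.le
        rw [div_mul_cancel₀ _ hc.ne'] at this
        linarith
      have hx2' : x < Pcum s p (m + 1) := by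
        rw [div_lt_one hc] at hx2
        linarith
      have hy1' : (0 : ℝ) ≤ y := by nlinarith
      have hy2' : y < 1 := by nlinarith
      have hb : branchIndex s p x = m := branchIndex_eq hp hm hx1' hx2'
      have hTz : multiBaker s p (n, x, y) =
          (n + (m : ℤ) - (s : ℤ), (x - Pcum s p m) / p ((m : ℤ) - s),
            p ((m : ℤ) - s) * y + Scum s p m) := by
        show (n + (branchIndex s p x : ℤ) - (s : ℤ),
          (x - Pcum s p (branchIndex s p x)) / p ((branchIndex s p x : ℤ) - s),
          p ((s : ℤ) - (branchIndex s p x : ℤ)) * y + Scum s p (branchIndex s p x)) = _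
        rw [hb, hsymc]
      refine ⟨?_, ⟨hx1', hx2'⟩, hy1', hy2'⟩
      rw [hTz]; exact hzS
  -- put everything together
  refine ⟨hT, ?_⟩
  rw [hmu]
  ext S hS
  rw [Measure.map_apply hT hS, Measure.restrict_apply hS, Measure.restrict_apply (hT hS)]
  calc lam (multiBaker s p ⁻¹' S ∩ U)
      = lam (⋃ m ∈ Finset.range r, multiBaker s p ⁻¹' S ∩ E m) := by
        rw [hUeqE, Set.inter_iUnion₂]
    _ = ∑ m ∈ Finset.range r, lam (multiBaker s p ⁻¹' S ∩ E m) := by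
        refine measure_biUnion_finset ?_ (fun m _ => (hT hS).inter (hEmeas m))
        intro a ha b hb hab
        exact (hEdisj a ha b hb hab).mono inter_subset_right inter_subset_right
    _ = ∑ m ∈ Finset.range r, lam (S ∩ F m) := by
        refine Finset.sum_congr rfl (fun m hm => ?_)
        rw [Finset.mem_range] at hm
        rw [hkey m hm S, ← Measure.map_apply (hTmp m hm).measurable (hS.inter (hFmeas m)),
          (hTmp m hm).map_eq]
    _ = lam (⋃ m ∈ Finset.range r, S ∩ F m) := by
        refine (measure_biUnion_finset ?_ (fun m _ => hS.inter (hFmeas m))).symm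
        intro a ha b hb hab
        exact (hFdisj a ha b hb hab).mono inter_subset_right inter_subset_right
    _ = lam (S ∩ U) := by rw [← Set.inter_iUnion₂, ← hUeqF]
end

section
/- For every q ∈ (0,1) there exists a unique continuous function F_0 : [0,1] → ℝ satisfying F_0(y) = q·F_0(y/(1−q)) for all y ∈ [0,1−q] and F_0(y) = q + (1−q)·F_0((y−(1−q))/q) for all y ∈ [1−q,1]. Moreover F_0(0) = 0, F_0(1) = 1, and F_0 is strictly increasing on [0,1]. -/
/-- `F` satisfies the functional equations of the cumulative function of the stationary
state of the reversible dissipative dyadic multi-baker map with parameter `q`: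
`F(y) = q F(y/(1-q))` on `[0, 1-q]` and `F(y) = q + (1-q) F((y-(1-q))/q)` on `[1-q, 1]`. -/
def IsStationaryCumulative (q : ℝ) (F : C(Set.Icc (0 : ℝ) 1, ℝ)) : Prop :=
  (∀ (y : ℝ) (h1 : y ∈ Set.Icc (0 : ℝ) 1) (_ : y ≤ 1 - q)
      (h2 : y / (1 - q) ∈ Set.Icc (0 : ℝ) 1),
    F ⟨y, h1⟩ = q * F ⟨y / (1 - q), h2⟩) ∧
  (∀ (y : ℝ) (h1 : y ∈ Set.Icc (0 : ℝ) 1) (_ : 1 - q ≤ y)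
      (h2 : (y - (1 - q)) / q ∈ Set.Icc (0 : ℝ) 1),
    F ⟨y, h1⟩ = q + (1 - q) * F ⟨(y - (1 - q)) / q, h2⟩)

namespace SCAux
open Set




noncomputable def lft (q : ℝ) : List Bool → ℝ
  | [] => 0
  | false :: w => (1 - q) * lft q w
  | true :: w => q * lft q w + (1 - q)

noncomputable def len (q : ℝ) : List Bool → ℝ
  | [] => 1
  | false :: w => (1 - q) * len q w
  | true :: w => q * len q w

lemma bounds {q : ℝ} (hq0 : 0 < q) (hq1 : q < 1) (w : List Bool) :
    0 ≤ lft q w ∧ 0 < len q w ∧ lft q w + len q w ≤ 1 := by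
  have h1q : 0 < 1 - q := by linarith
  induction w with
  | nil => simp [lft, len]
  | cons b w ih =>
    obtain ⟨h1, h2, h3⟩ := ih
    cases b <;> simp only [lft, len] <;>
      exact ⟨by positivity, by positivity, by nlinarith⟩

lemma replicate_false {q : ℝ} (k : ℕ) : lft q (List.replicate k false) = 0 ∧
    len q (List.replicate k false) = (1 - q) ^ k := by
  induction k with
  | zero => simp [lft, len]
  | succ n ih => simp [List.replicate_succ, lft, len, ih, pow_succ, mul_comm]

lemma main {q : ℝ} (hq0 : 0 < q) (hq1 : q < 1) :
    ∀ (n : ℕ) (a b : ℝ), 0 ≤ a → b ≤ 1 → a + (max q (1 - q)) ^ n ≤ b →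
    ∃ w : List Bool, a ≤ lft q w ∧ lft q w + len q w ≤ b := by
  have h1q : 0 < 1 - q := by linarith
  have hM1 : q ≤ max q (1 - q) := le_max_left _ _
  have hM2 : 1 - q ≤ max q (1 - q) := le_max_right _ _
  have hMpos : 0 < max q (1 - q) := lt_of_lt_of_le hq0 hM1
  intro n
  induction n with
  | zero =>
    intro a b ha hb hab
    refine ⟨[], ?_, ?_⟩ <;> simp only [lft, len] <;> simp at hab ⊢ <;> linarith
  | succ n ih =>
    intro a b ha hb hab
    have hMn : (0:ℝ) < (max q (1-q)) ^ n := pow_pos hMpos n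
    by_cases hb' : b ≤ 1 - q
    · have hpow : (max q (1-q))^n * (1 - q) ≤ (max q (1-q))^(n+1) := by
        rw [pow_succ]; exact mul_le_mul_of_nonneg_left hM2 hMn.le
      have key : a / (1 - q) + (max q (1-q)) ^ n ≤ b / (1 - q) := by
        rw [div_add' _ _ _ h1q.ne', div_le_div_iff₀ h1q h1q]
        nlinarith
      obtain ⟨w, hw1, hw2⟩ := ih (a / (1-q)) (b / (1-q))
        (div_nonneg ha h1q.le) (by rw [div_le_one h1q]; linarith) key
      have ha2 : (1-q) * (a / (1-q)) = a := by field_simp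
      have hb2 : (1-q) * (b / (1-q)) = b := by field_simp
      refine ⟨false :: w, ?_, ?_⟩ <;> simp only [lft, len] <;> nlinarith
    · by_cases ha' : 1 - q ≤ a
      · have hpow : (max q (1-q))^n * q ≤ (max q (1-q))^(n+1) := by
          rw [pow_succ]; exact mul_le_mul_of_nonneg_left hM1 hMn.le
        have key : (a - (1-q)) / q + (max q (1-q)) ^ n ≤ (b - (1-q)) / q := by
          rw [div_add' _ _ _ hq0.ne', div_le_div_iff₀ hq0 hq0]
          nlinarith
        obtain ⟨w, hw1, hw2⟩ := ih ((a - (1-q))/q) ((b - (1-q))/q)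
          (div_nonneg (by linarith) hq0.le) (by rw [div_le_one hq0]; linarith) key
        have ha2 : q * ((a - (1-q)) / q) = a - (1-q) := by field_simp
        have hb2 : q * ((b - (1-q)) / q) = b - (1-q) := by field_simp
        refine ⟨true :: w, ?_, ?_⟩ <;> simp only [lft, len] <;> nlinarith
      · push_neg at hb' ha'
        have hb'' : 0 < (b - (1-q)) / q := div_pos (by linarith) hq0
        obtain ⟨k, hk⟩ := exists_pow_lt_of_lt_one hb'' (show 1 - q < 1 by linarith)
        obtain ⟨hl, hlen⟩ := replicate_false (q := q) k
        have hb2 : q * ((b - (1-q)) / q) = b - (1-q) := by field_simp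
        have hkk : (0:ℝ) < (1-q)^k := pow_pos h1q k
        refine ⟨true :: List.replicate k false, ?_, ?_⟩ <;>
          simp only [lft, len, hl, hlen] <;> nlinarith


lemma gkey {q : ℝ} (hq0 : 0 < q) (hq1 : q < 1) (g : ℝ → ℝ)
    (hg0 : ∀ z, 0 ≤ z → z ≤ 1 → g ((1 - q) * z) = q * g z)
    (hg1 : ∀ z, 0 ≤ z → z ≤ 1 → g (q * z + (1 - q)) = q + (1 - q) * g z)
    (hgz : g 0 = 0) (hgo : g 1 = 1) :
    ∀ w : List Bool, g (lft q w) < g (lft q w + len q w) := by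
  have h1q : 0 < 1 - q := by linarith
  intro w
  induction w with
  | nil => simp only [lft, len, zero_add, hgz, hgo]; norm_num
  | cons b w ih =>
    obtain ⟨h1, h2, h3⟩ := bounds hq0 hq1 w
    cases b
    · simp only [lft, len]
      rw [show (1-q) * lft q w + (1-q) * len q w = (1-q) * (lft q w + len q w) by ring,
        hg0 _ h1 (by linarith), hg0 _ (by linarith) h3]
      nlinarith
    · simp only [lft, len]
      rw [show q * lft q w + (1-q) + q * len q w = q * (lft q w + len q w) + (1-q) by ring,
        hg1 _ h1 (by linarith), hg1 _ (by linarith) h3]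
      nlinarith

lemma gstrict {q : ℝ} (hq0 : 0 < q) (hq1 : q < 1) (g : ℝ → ℝ)
    (hg0 : ∀ z, 0 ≤ z → z ≤ 1 → g ((1 - q) * z) = q * g z)
    (hg1 : ∀ z, 0 ≤ z → z ≤ 1 → g (q * z + (1 - q)) = q + (1 - q) * g z)
    (hgz : g 0 = 0) (hgo : g 1 = 1) (hmono : Monotone g)
    {a b : ℝ} (ha : 0 ≤ a) (hb : b ≤ 1) (hab : a < b) : g a < g b := by
  have hM1 : max q (1 - q) < 1 := max_lt hq1 (by linarith)
  obtain ⟨n, hn⟩ := exists_pow_lt_of_lt_one (show (0:ℝ) < b - a by linarith) hM1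
  obtain ⟨w, hw1, hw2⟩ := main hq0 hq1 n a b ha hb (by linarith)
  have h2 := (bounds hq0 hq1 w).2.1
  calc g a ≤ g (lft q w) := hmono hw1
    _ < g (lft q w + len q w) := gkey hq0 hq1 g hg0 hg1 hgz hgo w
    _ ≤ g b := hmono hw2





open Set

noncomputable def pr : ℝ → (Set.Icc (0:ℝ) 1) := Set.projIcc 0 1 zero_le_one

def Sset (q : ℝ) : Set C(Set.Icc (0:ℝ) 1, ℝ) :=
  {F | F (pr 0) = 0 ∧ F (pr 1) = 1 ∧ Monotone ⇑F}

noncomputable def TFun (q : ℝ) (F : C(Set.Icc (0:ℝ) 1, ℝ)) (x : Set.Icc (0:ℝ) 1) : ℝ :=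
  if (x:ℝ) ≤ 1 - q then q * F (pr ((x:ℝ) / (1 - q)))
  else q + (1 - q) * F (pr (((x:ℝ) - (1 - q)) / q))

lemma pr_mono : Monotone (pr) := monotone_projIcc zero_le_one

lemma pr_coe {z : ℝ} (h0 : 0 ≤ z) (h1 : z ≤ 1) : ((pr z : Set.Icc (0:ℝ) 1) : ℝ) = z := by
  rw [pr, projIcc_of_mem _ ⟨h0, h1⟩]

lemma tfun_cont {q : ℝ} (hq1 : q < 1) (F : C(Set.Icc (0:ℝ) 1, ℝ))
    (hF : F ∈ Sset q) : Continuous (TFun q F) := by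
  have h1q : 0 < 1 - q := by linarith
  apply Continuous.if_le
  · exact continuous_const.mul (F.continuous.comp (continuous_projIcc.comp
      (continuous_subtype_val.div_const _)))
  · exact continuous_const.add (continuous_const.mul (F.continuous.comp (continuous_projIcc.comp
      ((continuous_subtype_val.sub continuous_const).div_const _))))
  · exact continuous_subtype_val
  · exact continuous_const
  · intro x hx
    rw [hx, div_self h1q.ne', sub_self, zero_div, hF.1, hF.2.1]
    ring

noncomputable def T (q : ℝ) (hq0 : 0 < q) (hq1 : q < 1) (F : ↥(Sset q)) : ↥(Sset q) := by
  have h1q : 0 < 1 - q := by linarith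
  have hc0 : ((pr 0 : Set.Icc (0:ℝ) 1) : ℝ) = 0 := pr_coe le_rfl zero_le_one
  have hc1 : ((pr 1 : Set.Icc (0:ℝ) 1) : ℝ) = 1 := pr_coe zero_le_one le_rfl
  refine ⟨⟨TFun q F.1, tfun_cont hq1 F.1 F.2⟩, ?_, ?_, ?_⟩
  · show TFun q F.1 (pr 0) = 0
    rw [TFun, hc0, if_pos h1q.le, zero_div, F.2.1, mul_zero]
  · show TFun q F.1 (pr 1) = 1
    rw [TFun, hc1, if_neg (by linarith), show (1 - (1-q))/q = 1 by field_simp; ring, F.2.2.1]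
    ring
  · intro x y hxy
    have hxy' : (x:ℝ) ≤ (y:ℝ) := hxy
    have hmono := F.2.2.2
    have hFle : ∀ z z' : ℝ, z ≤ z' → F.1 (pr z) ≤ F.1 (pr z') :=
      fun z z' h => hmono (pr_mono h)
    have hF0 : ∀ z : ℝ, 0 ≤ z → 0 ≤ F.1 (pr z) := by
      intro z h
      have := hFle 0 z h; rw [F.2.1] at this; exact this
    have hF1 : ∀ z : ℝ, z ≤ 1 → F.1 (pr z) ≤ 1 := by
      intro z h
      have := hFle z 1 h; rw [F.2.2.1] at this; exact this
    show TFun q F.1 x ≤ TFun q F.1 y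
    rw [TFun, TFun]
    by_cases hx : (x:ℝ) ≤ 1 - q <;> by_cases hy : (y:ℝ) ≤ 1 - q
    · rw [if_pos hx, if_pos hy]
      exact mul_le_mul_of_nonneg_left (hFle _ _ (by gcongr)) hq0.le
    · rw [if_pos hx, if_neg hy]
      push_neg at hy
      have l1 : F.1 (pr ((x:ℝ)/(1-q))) ≤ 1 := hF1 _ (by rw [div_le_one h1q]; exact hx)
      have l2 : 0 ≤ F.1 (pr (((y:ℝ) - (1-q))/q)) := hF0 _ (div_nonneg (by linarith) hq0.le)
      nlinarith
    · exact absurd (hxy'.trans hy) hx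
    · rw [if_neg hx, if_neg hy]
      have := hFle (((x:ℝ) - (1-q))/q) (((y:ℝ) - (1-q))/q) (by gcongr)
      nlinarith

lemma sset_closed (q : ℝ) : IsClosed (Sset q) := by
  have h1 : IsClosed {F : C(Set.Icc (0:ℝ) 1, ℝ) | F (pr 0) = 0} :=
    isClosed_eq (continuous_eval_const (pr 0)) continuous_const
  have h2 : IsClosed {F : C(Set.Icc (0:ℝ) 1, ℝ) | F (pr 1) = 1} :=
    isClosed_eq (continuous_eval_const (pr 1)) continuous_const
  have h3 : IsClosed {F : C(Set.Icc (0:ℝ) 1, ℝ) | Monotone ⇑F} := by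
    have : {F : C(Set.Icc (0:ℝ) 1, ℝ) | Monotone ⇑F} =
        ⋂ (p : Set.Icc (0:ℝ) 1 × Set.Icc (0:ℝ) 1) (_ : p.1 ≤ p.2),
          {F : C(Set.Icc (0:ℝ) 1, ℝ) | F p.1 ≤ F p.2} := by
      ext F
      simp only [Set.mem_setOf_eq, Set.mem_iInter]
      exact ⟨fun h p hp => h hp, fun h a b hab => h (a, b) hab⟩
    rw [this]
    exact isClosed_iInter fun p => isClosed_iInter fun _ =>
      isClosed_le (continuous_eval_const p.1) (continuous_eval_const p.2)
  exact h1.inter (h2.inter h3)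

noncomputable def idS (q : ℝ) : ↥(Sset q) :=
  ⟨⟨fun x => (x:ℝ), continuous_subtype_val⟩,
    pr_coe le_rfl zero_le_one, pr_coe zero_le_one le_rfl, fun a b h => h⟩

noncomputable def Mk (q : ℝ) (hq0 : 0 < q) (hq1 : q < 1) : NNReal :=
  ⟨max q (1 - q), le_trans hq0.le (le_max_left _ _)⟩

lemma T_contracting {q : ℝ} (hq0 : 0 < q) (hq1 : q < 1) :
    ContractingWith (Mk q hq0 hq1) (T q hq0 hq1) := by
  have h1q : 0 < 1 - q := by linarith
  constructor
  · have h : (Mk q hq0 hq1 : ℝ) < 1 := max_lt hq1 (by linarith)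
    exact_mod_cast h
  · apply LipschitzWith.of_dist_le_mul
    intro F G
    rw [Subtype.dist_eq]
    have hM : (Mk q hq0 hq1 : ℝ) = max q (1 - q) := rfl
    have hd : (0:ℝ) ≤ max q (1 - q) * dist F.1 G.1 := by positivity
    rw [Subtype.dist_eq F G]
    rw [hM, ContinuousMap.dist_le hd]
    intro x
    show dist (TFun q F.1 x) (TFun q G.1 x) ≤ _
    rw [TFun, TFun]
    by_cases hx : (x:ℝ) ≤ 1 - q
    · rw [if_pos hx, if_pos hx, Real.dist_eq]
      have : q * F.1 (pr ((x:ℝ)/(1-q))) - q * G.1 (pr ((x:ℝ)/(1-q)))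
          = q * (F.1 (pr ((x:ℝ)/(1-q))) - G.1 (pr ((x:ℝ)/(1-q)))) := by ring
      rw [this, abs_mul, abs_of_pos hq0]
      have h1 : |F.1 (pr ((x:ℝ)/(1-q))) - G.1 (pr ((x:ℝ)/(1-q)))| ≤ dist F.1 G.1 := by
        rw [← Real.dist_eq]; exact ContinuousMap.dist_apply_le_dist _
      have h2 : q ≤ max q (1-q) := le_max_left _ _
      have hdd : (0:ℝ) ≤ dist F.1 G.1 := dist_nonneg
      calc q * |_| ≤ q * dist F.1 G.1 := by nlinarith
        _ ≤ (Mk q hq0 hq1 : ℝ) * dist F.1 G.1 := by rw [hM]; nlinarith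
    · rw [if_neg hx, if_neg hx, Real.dist_eq]
      set z := ((x:ℝ) - (1-q))/q
      have : q + (1-q) * F.1 (pr z) - (q + (1-q) * G.1 (pr z))
          = (1-q) * (F.1 (pr z) - G.1 (pr z)) := by ring
      rw [this, abs_mul, abs_of_pos h1q]
      have h1 : |F.1 (pr z) - G.1 (pr z)| ≤ dist F.1 G.1 := by
        rw [← Real.dist_eq]; exact ContinuousMap.dist_apply_le_dist _
      have h2 : 1 - q ≤ max q (1-q) := le_max_right _ _
      have hdd : (0:ℝ) ≤ dist F.1 G.1 := dist_nonneg
      calc (1-q) * |_| ≤ (1-q) * dist F.1 G.1 := by nlinarith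
        _ ≤ (Mk q hq0 hq1 : ℝ) * dist F.1 G.1 := by rw [hM]; nlinarith


lemma pr_eq {z : ℝ} (h : z ∈ Set.Icc (0:ℝ) 1) : pr z = ⟨z, h⟩ := projIcc_of_mem _ h

lemma exists_solution {q : ℝ} (hq0 : 0 < q) (hq1 : q < 1) :
    ∃ F : C(Set.Icc (0:ℝ) 1, ℝ), IsStationaryCumulative q F ∧ F ∈ Sset q := by
  have h1q : 0 < 1 - q := by linarith
  haveI : Nonempty ↥(Sset q) := ⟨idS q⟩
  haveI : CompleteSpace ↥(Sset q) := (sset_closed q).completeSpace_coe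
  set F₀ : ↥(Sset q) := ContractingWith.fixedPoint (T q hq0 hq1) (T_contracting hq0 hq1) with hF₀
  have hfix : T q hq0 hq1 F₀ = F₀ := (T_contracting hq0 hq1).fixedPoint_isFixedPt
  have hpt : ∀ x : Set.Icc (0:ℝ) 1, F₀.1 x = TFun q F₀.1 x := by
    intro x
    conv_lhs => rw [← hfix]
    rfl
  refine ⟨F₀.1, ⟨?_, ?_⟩, F₀.2⟩
  · intro y h1 hy h2
    rw [hpt ⟨y, h1⟩, TFun, if_pos (show ((⟨y,h1⟩ : Set.Icc (0:ℝ) 1):ℝ) ≤ 1 - q from hy)]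
    congr 1
    exact congrArg _ (pr_eq h2)
  · intro y h1 hy h2
    by_cases hy' : y ≤ 1 - q
    · have hyq : y = 1 - q := le_antisymm hy' hy
      rw [hpt ⟨y, h1⟩, TFun, if_pos (show ((⟨y,h1⟩ : Set.Icc (0:ℝ) 1):ℝ) ≤ 1 - q from hy')]
      have e1 : (y : ℝ) / (1 - q) = 1 := by rw [hyq]; field_simp
      have e2 : (y - (1 - q)) / q = 0 := by rw [hyq]; simp
      rw [show ((⟨y,h1⟩ : Set.Icc (0:ℝ) 1):ℝ) = y from rfl, e1]
      rw [show (⟨(y - (1-q))/q, h2⟩ : Set.Icc (0:ℝ) 1) = pr 0 by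
        rw [pr_eq ⟨le_rfl, zero_le_one⟩]; exact Subtype.ext e2]
      rw [F₀.2.1, F₀.2.2.1]
      ring
    · rw [hpt ⟨y, h1⟩, TFun, if_neg (show ¬((⟨y,h1⟩ : Set.Icc (0:ℝ) 1):ℝ) ≤ 1 - q from hy')]
      congr 1
      exact congrArg (fun t => (1-q) * t) (congrArg _ (pr_eq h2))

lemma unique_solution {q : ℝ} (hq0 : 0 < q) (hq1 : q < 1)
    (F G : C(Set.Icc (0:ℝ) 1, ℝ)) (hF : IsStationaryCumulative q F) (hG : IsStationaryCumulative q G) : F = G := by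
  have h1q : 0 < 1 - q := by linarith
  have hM : max q (1 - q) < 1 := max_lt hq1 (by linarith)
  have hdd : (0:ℝ) ≤ dist F G := dist_nonneg
  have key : dist F G ≤ max q (1 - q) * dist F G := by
    rw [ContinuousMap.dist_le (by positivity)]
    rintro ⟨y, hy1⟩
    by_cases hy : y ≤ 1 - q
    · have h2 : y / (1 - q) ∈ Set.Icc (0:ℝ) 1 :=
        ⟨div_nonneg hy1.1 h1q.le, (div_le_one h1q).2 hy⟩
      rw [hF.1 y hy1 hy h2, hG.1 y hy1 hy h2, Real.dist_eq]
      have hb := ContinuousMap.dist_apply_le_dist (f := F) (g := G) ⟨y/(1-q), h2⟩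
      rw [Real.dist_eq] at hb
      rw [show q * F ⟨y/(1-q), h2⟩ - q * G ⟨y/(1-q), h2⟩
          = q * (F ⟨y/(1-q), h2⟩ - G ⟨y/(1-q), h2⟩) by ring, abs_mul, abs_of_pos hq0]
      have h3 : q ≤ max q (1-q) := le_max_left _ _
      nlinarith [abs_nonneg (F ⟨y/(1-q), h2⟩ - G ⟨y/(1-q), h2⟩)]
    · push_neg at hy
      have h2 : (y - (1 - q)) / q ∈ Set.Icc (0:ℝ) 1 :=
        ⟨div_nonneg (by linarith) hq0.le, by rw [div_le_one hq0]; linarith [hy1.2]⟩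
      rw [hF.2 y hy1 hy.le h2, hG.2 y hy1 hy.le h2, Real.dist_eq]
      have hb := ContinuousMap.dist_apply_le_dist (f := F) (g := G) ⟨(y-(1-q))/q, h2⟩
      rw [Real.dist_eq] at hb
      rw [show q + (1-q) * F ⟨(y-(1-q))/q, h2⟩ - (q + (1-q) * G ⟨(y-(1-q))/q, h2⟩)
          = (1-q) * (F ⟨(y-(1-q))/q, h2⟩ - G ⟨(y-(1-q))/q, h2⟩) by ring, abs_mul, abs_of_pos h1q]
      have h3 : 1 - q ≤ max q (1-q) := le_max_right _ _
      nlinarith [abs_nonneg (F ⟨(y-(1-q))/q, h2⟩ - G ⟨(y-(1-q))/q, h2⟩)]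
  have : dist F G = 0 := by nlinarith
  exact eq_of_dist_eq_zero this



end SCAux

/-- For every `q ∈ (0,1)` there exists a unique continuous `F₀ : [0,1] → ℝ` with
`F₀(y) = q F₀(y/(1-q))` for `y ∈ [0,1-q]` and `F₀(y) = q + (1-q) F₀((y-(1-q))/q)` for
`y ∈ [1-q,1]`.  Moreover `F₀(0) = 0`, `F₀(1) = 1`, and `F₀` is strictly increasing on
`[0,1]`. -/
theorem stationaryCumulative_existsUnique (q : ℝ) (hq : q ∈ Set.Ioo (0 : ℝ) 1) :
    (∃! F : C(Set.Icc (0 : ℝ) 1, ℝ), IsStationaryCumulative q F) ∧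
    (∀ F : C(Set.Icc (0 : ℝ) 1, ℝ), IsStationaryCumulative q F →
      F ⟨0, Set.mem_Icc.mpr ⟨le_refl 0, zero_le_one⟩⟩ = 0 ∧
      F ⟨1, Set.mem_Icc.mpr ⟨zero_le_one, le_refl 1⟩⟩ = 1 ∧
      StrictMono ⇑F) := by
  obtain ⟨hq0, hq1⟩ := hq
  have h1q : 0 < 1 - q := by linarith
  obtain ⟨F₀, hsol, hmem⟩ := SCAux.exists_solution hq0 hq1
  have huniq : ∀ G, IsStationaryCumulative q G → G = F₀ := fun G hG =>
    SCAux.unique_solution hq0 hq1 G F₀ hG hsol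
  refine ⟨⟨F₀, hsol, huniq⟩, ?_⟩
  intro F hF
  have hFe : F = F₀ := huniq F hF
  subst hFe
  refine ⟨?_, ?_, ?_⟩
  · have := hmem.1
    rwa [SCAux.pr_eq ⟨le_rfl, zero_le_one⟩] at this
  · have := hmem.2.1
    rwa [SCAux.pr_eq ⟨zero_le_one, le_rfl⟩] at this
  · set g : ℝ → ℝ := fun y => F (SCAux.pr y) with hgdef
    have hmono : Monotone ⇑F := hmem.2.2
    have gmono : Monotone g := fun a b h => hmono (SCAux.pr_mono h)
    have gz : g 0 = 0 := hmem.1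
    have go : g 1 = 1 := hmem.2.1
    have hg0 : ∀ z, 0 ≤ z → z ≤ 1 → g ((1 - q) * z) = q * g z := by
      intro z hz0 hz1
      have hz : z ∈ Set.Icc (0:ℝ) 1 := ⟨hz0, hz1⟩
      have hmem1 : (1 - q) * z ∈ Set.Icc (0:ℝ) 1 := ⟨by positivity, by nlinarith⟩
      have hcan : ((1 - q) * z) / (1 - q) = z := mul_div_cancel_left₀ z h1q.ne'
      have hmem2 : ((1 - q) * z) / (1 - q) ∈ Set.Icc (0:ℝ) 1 := by rw [hcan]; exact hz
      have e := hF.1 ((1 - q) * z) hmem1 (by nlinarith) hmem2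
      show F (SCAux.pr ((1 - q) * z)) = q * F (SCAux.pr z)
      rw [SCAux.pr_eq hmem1, SCAux.pr_eq hz, e]
      exact congrArg (fun t => q * t) (congrArg _ (Subtype.ext hcan))
    have hg1 : ∀ z, 0 ≤ z → z ≤ 1 → g (q * z + (1 - q)) = q + (1 - q) * g z := by
      intro z hz0 hz1
      have hz : z ∈ Set.Icc (0:ℝ) 1 := ⟨hz0, hz1⟩
      have hmem1 : q * z + (1 - q) ∈ Set.Icc (0:ℝ) 1 := ⟨by positivity, by nlinarith⟩
      have hcan : (q * z + (1 - q) - (1 - q)) / q = z := by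
        rw [add_sub_cancel_right]; exact mul_div_cancel_left₀ z hq0.ne'
      have hmem2 : (q * z + (1 - q) - (1 - q)) / q ∈ Set.Icc (0:ℝ) 1 := by rw [hcan]; exact hz
      have e := hF.2 (q * z + (1 - q)) hmem1 (by nlinarith) hmem2
      show F (SCAux.pr (q * z + (1 - q))) = q + (1 - q) * F (SCAux.pr z)
      rw [SCAux.pr_eq hmem1, SCAux.pr_eq hz, e]
      exact congrArg (fun t => q + (1 - q) * t) (congrArg _ (Subtype.ext hcan))
    intro x y hxy
    have hxy2 : (x:ℝ) < (y:ℝ) := Subtype.coe_lt_coe.mpr hxy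
    have key := SCAux.gstrict hq0 hq1 g hg0 hg1 gz go gmono x.2.1 y.2.2 hxy2
    have ex : g (x:ℝ) = F x :=
      congrArg _ ((SCAux.pr_eq x.2).trans (Subtype.coe_eta x x.2))
    have ey : g (y:ℝ) = F y :=
      congrArg _ ((SCAux.pr_eq y.2).trans (Subtype.coe_eta y y.2))
    rwa [ex, ey] at key
end
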